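/- Let μ, ν ∈ Λ^{𝔭_I} and suppose ν = (w s_β) · μ for some β ∈ Φ^+ \ Φ_I and w ∈ W_I, where ⟨μ + ρ, β^∨⟩ ∈ ℤ_{>0}. If μ ∈ λ + 𝒳_r, then ν ∈ λ + 𝒳_r. -/

import Mathlib

open Finset

inductive RSType where
  | B
  | C
  | D
deriving DecidableEq

noncomputable def eps (n : ℕ) (i : Fin n) : Fin n → ℝ := fun j => if j = i then 1 else 0

noncomputable def simpleRoot (n : ℕ) (t : RSType) (i : Fin n) : Fin n → ℝ :=
  if (i : ℕ) + 1 < n then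
    eps n i - (fun j : Fin n => if (j : ℕ) = (i : ℕ) + 1 then 1 else 0)
  else
    match t with
    | RSType.B => eps n i
    | RSType.C => (2 : ℝ) • eps n i
    | RSType.D => (fun j : Fin n => if (j : ℕ) + 1 = (i : ℕ) then 1 else 0) + eps n i

noncomputable def inn (n : ℕ) (x y : Fin n → ℝ) : ℝ := ∑ i, x i * y i

noncomputable def pairing (n : ℕ) (x y : Fin n → ℝ) : ℝ := 2 * inn n x y / inn n y y

/-- Membership in `Λ^{𝔭_I}` where `I = Π \ {α_{p 1}, …, α_{p k}}`:
`⟨μ, α^∨⟩ ∈ ℕ` for all simple roots `α ∈ I`. -/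
def inLam (n : ℕ) (t : RSType) (p : ℕ → ℕ) (k : ℕ) (μ : Fin n → ℝ) : Prop :=
  ∀ i : Fin n, (∀ j, 1 ≤ j → j ≤ k → (i : ℕ) + 1 ≠ p j) →
    ∃ m : ℕ, pairing n μ (simpleRoot n t i) = (m : ℝ)

/-- `ρ`, the half sum of the positive roots. -/
noncomputable def rho (n : ℕ) (t : RSType) : Fin n → ℝ :=
  (1 / 2 : ℝ) •
    ((∑ q ∈ Finset.univ.filter (fun q : Fin n × Fin n => q.1 < q.2),
        ((eps n q.1 - eps n q.2) + (eps n q.1 + eps n q.2))) +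
      match t with
      | RSType.B => ∑ i, eps n i
      | RSType.C => ∑ i, (2 : ℝ) • eps n i
      | RSType.D => 0)

/-- `β ∈ Φ^+`. -/
def isPosRoot (n : ℕ) (t : RSType) (β : Fin n → ℝ) : Prop :=
  (∃ i j : Fin n, i < j ∧ (β = eps n i - eps n j ∨ β = eps n i + eps n j)) ∨
  (t = RSType.B ∧ ∃ i, β = eps n i) ∨
  (t = RSType.C ∧ ∃ i, β = (2 : ℝ) • eps n i)

/-- The simple roots lying in `I = Π \ {α_{p 1}, …, α_{p k}}`. -/
def Iroots (n : ℕ) (t : RSType) (p : ℕ → ℕ) (k : ℕ) : Set (Fin n → ℝ) :=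
  {x | ∃ i : Fin n, (∀ j, 1 ≤ j → j ≤ k → (i : ℕ) + 1 ≠ p j) ∧ x = simpleRoot n t i}

/-- `β ∈ Φ_I = Φ ∩ ℤI`. -/
def inPhiI (n : ℕ) (t : RSType) (p : ℕ → ℕ) (k : ℕ) (β : Fin n → ℝ) : Prop :=
  (isPosRoot n t β ∨ isPosRoot n t (-β)) ∧
    β ∈ Submodule.span ℤ (Iroots n t p k)

/-- The reflection `s_β(x) = x - ⟨x, β^∨⟩ β`. -/
noncomputable def sRefl (n : ℕ) (β : Fin n → ℝ) : (Fin n → ℝ) → (Fin n → ℝ) :=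
  fun x => x - pairing n x β • β

/-- `𝒳_r = {a ∈ ℤ^n : Σ |a_i| ≤ r}`. -/
def Xr (n : ℕ) (r : ℤ) : Set (Fin n → ℤ) := {a | ∑ i, |a i| ≤ r}

/-- `μ ∈ λ + 𝒳_r`. -/
def inLamX (n : ℕ) (lam : Fin n → ℝ) (r : ℕ) (μ : Fin n → ℝ) : Prop :=
  ∃ a : Fin n → ℤ, a ∈ Xr n (r : ℤ) ∧ μ = lam + fun i => (a i : ℝ)
/-- `W_I`: the subgroup of the Weyl group generated by the reflections `s_α`,
`α ∈ I` (realized as the closure, under composition, of this set of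
involutions inside `Function.End (Fin n → ℝ)`). -/
noncomputable def WI (n : ℕ) (t : RSType) (p : ℕ → ℕ) (k : ℕ) :
    Submonoid (Function.End (Fin n → ℝ)) :=
  Submonoid.closure
    {w | ∃ i : Fin n, (∀ j, 1 ≤ j → j ≤ k → (i : ℕ) + 1 ≠ p j) ∧
      w = sRefl n (simpleRoot n t i)}

section Helpers

open Finset

variable {n : ℕ}

lemma eps_self (i : Fin n) : eps n i i = 1 := by simp [eps]

lemma eps_ne {i c : Fin n} (h : c ≠ i) : eps n i c = 0 := by simp [eps, h]

lemma inn_eps (x : Fin n → ℝ) (i : Fin n) : inn n x (eps n i) = x i := by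
  unfold inn eps
  rw [Finset.sum_eq_single i] <;> simp (config := {contextual := true}) [eq_comm]

lemma inn_sub (x y z : Fin n → ℝ) : inn n x (y - z) = inn n x y - inn n x z := by
  unfold inn
  rw [← Finset.sum_sub_distrib]
  exact Finset.sum_congr rfl fun c _ => by simp [mul_sub]

lemma inn_add (x y z : Fin n → ℝ) : inn n x (y + z) = inn n x y + inn n x z := by
  unfold inn
  rw [← Finset.sum_add_distrib]
  exact Finset.sum_congr rfl fun c _ => by simp [mul_add]

lemma inn_smul (x y : Fin n → ℝ) (c : ℝ) : inn n x (c • y) = c * inn n x y := by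
  unfold inn
  rw [Finset.mul_sum]
  exact Finset.sum_congr rfl fun d _ => by simp; ring

lemma inn_addl (x y z : Fin n → ℝ) : inn n (x + y) z = inn n x z + inn n y z := by
  unfold inn
  rw [← Finset.sum_add_distrib]
  exact Finset.sum_congr rfl fun c _ => by simp [add_mul]

lemma inn_subl (x y z : Fin n → ℝ) : inn n (x - y) z = inn n x z - inn n y z := by
  unfold inn
  rw [← Finset.sum_sub_distrib]
  exact Finset.sum_congr rfl fun c _ => by simp [sub_mul]

lemma inn_smull (x y : Fin n → ℝ) (c : ℝ) : inn n (c • x) y = c * inn n x y := by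
  unfold inn
  rw [Finset.mul_sum]
  exact Finset.sum_congr rfl fun d _ => by simp; ring

lemma pairing_addl (x y z : Fin n → ℝ) :
    pairing n (x + y) z = pairing n x z + pairing n y z := by
  unfold pairing
  rw [inn_addl]; ring

lemma pairing_sub_eps (x : Fin n → ℝ) (i j : Fin n) (hij : i ≠ j) :
    pairing n x (eps n i - eps n j) = x i - x j := by
  unfold pairing
  simp only [inn_sub, inn_subl, inn_eps]
  have h1 : (eps n i - eps n j) i = 1 := by
    simp [Pi.sub_apply, eps_self, eps_ne hij]
  have h2 : (eps n i - eps n j) j = -1 := by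
    simp [Pi.sub_apply, eps_self, eps_ne hij.symm]
  rw [h1, h2]; ring

lemma pairing_add_eps (x : Fin n → ℝ) (i j : Fin n) (hij : i ≠ j) :
    pairing n x (eps n i + eps n j) = x i + x j := by
  unfold pairing
  simp only [inn_add, inn_addl, inn_eps]
  have h1 : (eps n i + eps n j) i = 1 := by
    simp [Pi.add_apply, eps_self, eps_ne hij]
  have h2 : (eps n i + eps n j) j = 1 := by
    simp [Pi.add_apply, eps_self, eps_ne hij.symm]
  rw [h1, h2]; ring

lemma pairing_eps (x : Fin n → ℝ) (i : Fin n) :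
    pairing n x (eps n i) = 2 * x i := by
  unfold pairing
  simp only [inn_eps, eps_self]; ring

lemma pairing_2eps (x : Fin n → ℝ) (i : Fin n) :
    pairing n x ((2:ℝ) • eps n i) = x i := by
  unfold pairing
  simp only [inn_smul, inn_smull, inn_eps, Pi.smul_apply, smul_eq_mul, eps_self]; ring

end Helpers
section Helpers2

open Finset

variable {n : ℕ}

lemma sRefl_sub_eps (x : Fin n → ℝ) (i j : Fin n) (hij : i ≠ j) (c : Fin n) :
    sRefl n (eps n i - eps n j) x c =
      if c = i then x j else if c = j then x i else x c := by
  unfold sRefl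
  rw [pairing_sub_eps x i j hij]
  by_cases hci : c = i
  · subst hci
    simp [Pi.sub_apply, Pi.smul_apply, smul_eq_mul, eps_self, eps_ne hij, hij]
  · by_cases hcj : c = j
    · subst hcj
      simp [Pi.sub_apply, Pi.smul_apply, smul_eq_mul, eps_self, eps_ne hij.symm, hci]
    · simp [Pi.sub_apply, Pi.smul_apply, smul_eq_mul, eps_ne (show c ≠ i from hci),
        eps_ne (show c ≠ j from hcj), hci, hcj]

lemma sRefl_add_eps (x : Fin n → ℝ) (i j : Fin n) (hij : i ≠ j) (c : Fin n) :
    sRefl n (eps n i + eps n j) x c =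
      if c = i then -x j else if c = j then -x i else x c := by
  unfold sRefl
  rw [pairing_add_eps x i j hij]
  by_cases hci : c = i
  · subst hci
    simp [Pi.sub_apply, Pi.add_apply, Pi.smul_apply, smul_eq_mul, eps_self,
      eps_ne hij, hij]
  · by_cases hcj : c = j
    · subst hcj
      simp [Pi.sub_apply, Pi.add_apply, Pi.smul_apply, smul_eq_mul, eps_self,
        eps_ne hij.symm, hci]
    · simp [Pi.sub_apply, Pi.add_apply, Pi.smul_apply, smul_eq_mul,
        eps_ne (show c ≠ i from hci), eps_ne (show c ≠ j from hcj), hci, hcj]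

lemma sRefl_eps (x : Fin n → ℝ) (i : Fin n) (c : Fin n) :
    sRefl n (eps n i) x c = if c = i then -x c else x c := by
  unfold sRefl
  rw [pairing_eps]
  by_cases hci : c = i
  · subst hci
    simp [Pi.sub_apply, Pi.smul_apply, smul_eq_mul, eps_self]
    ring
  · simp [Pi.sub_apply, Pi.smul_apply, smul_eq_mul, eps_ne (show c ≠ i from hci), hci]

lemma sRefl_2eps (x : Fin n → ℝ) (i : Fin n) (c : Fin n) :
    sRefl n ((2:ℝ) • eps n i) x c = if c = i then -x c else x c := by
  unfold sRefl
  rw [pairing_2eps]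
  by_cases hci : c = i
  · subst hci
    simp [Pi.sub_apply, Pi.smul_apply, smul_eq_mul, eps_self]
    ring
  · simp [Pi.sub_apply, Pi.smul_apply, smul_eq_mul, eps_ne (show c ≠ i from hci), hci]

lemma cross_ineq (x1 x2 h1 h2 : ℝ) (hx : x2 ≤ x1) (hh : h2 ≤ h1) :
    |x1 - h1| + |x2 - h2| ≤ |x1 - h2| + |x2 - h1| := by
  rcases abs_cases (x1 - h1) with ⟨e1, _⟩ | ⟨e1, _⟩ <;>
  rcases abs_cases (x2 - h2) with ⟨e2, _⟩ | ⟨e2, _⟩ <;>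
  rcases abs_cases (x1 - h2) with ⟨e3, _⟩ | ⟨e3, _⟩ <;>
  rcases abs_cases (x2 - h1) with ⟨e4, _⟩ | ⟨e4, _⟩ <;>
  rw [e1, e2, e3, e4] <;> linarith

lemma X2_ineq (m u v : ℝ) (hm : 0 ≤ m) (huv : m ≤ u + v) :
    |m - u| + |m - v| ≤ |u| + |v| := by
  rcases abs_cases (m - u) with ⟨e1, _⟩ | ⟨e1, _⟩ <;>
  rcases abs_cases (m - v) with ⟨e2, _⟩ | ⟨e2, _⟩ <;>
  rcases abs_cases u with ⟨e3, _⟩ | ⟨e3, _⟩ <;>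
  rcases abs_cases v with ⟨e4, _⟩ | ⟨e4, _⟩ <;>
  rw [e1, e2, e3, e4] <;> linarith

lemma flip_ineq (x h : ℝ) (hx : 0 ≤ x) (hh : h ≤ 0) : |x + h| ≤ |x - h| := by
  rcases abs_cases (x + h) with ⟨e1, _⟩ | ⟨e1, _⟩ <;>
  rcases abs_cases (x - h) with ⟨e2, _⟩ | ⟨e2, _⟩ <;>
  rw [e1, e2] <;> linarith

lemma sum_univ_two_split (f : Fin n → ℝ) (i j : Fin n) (hij : i ≠ j) :
    ∑ c, f c = f i + f j + ∑ c ∈ (univ.erase i).erase j, f c := by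
  have hj : j ∈ univ.erase i := Finset.mem_erase.2 ⟨hij.symm, Finset.mem_univ j⟩
  rw [← Finset.add_sum_erase _ f (Finset.mem_univ i), ← Finset.add_sum_erase _ f hj]
  ring

lemma sum_le_two_point (f g : Fin n → ℝ) (i j : Fin n) (hij : i ≠ j)
    (hoff : ∀ c, c ≠ i → c ≠ j → f c ≤ g c) (hsum : f i + f j ≤ g i + g j) :
    ∑ c, f c ≤ ∑ c, g c := by
  rw [sum_univ_two_split f i j hij, sum_univ_two_split g i j hij]
  have : ∑ c ∈ (univ.erase i).erase j, f c ≤ ∑ c ∈ (univ.erase i).erase j, g c := by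
    apply Finset.sum_le_sum
    intro c hc
    rcases Finset.mem_erase.1 hc with ⟨hcj, hc2⟩
    rcases Finset.mem_erase.1 hc2 with ⟨hci, _⟩
    exact hoff c hci hcj
  linarith

lemma sum_swap_two {M : Type*} [AddCommMonoid M] (s : Finset (Fin n))
    (f g : Fin n → M) (i j : Fin n) (hij : i ≠ j) (hmem : i ∈ s ↔ j ∈ s)
    (hoff : ∀ c ∈ s, c ≠ i → c ≠ j → f c = g c) (hsum : f i + f j = g i + g j) :
    ∑ c ∈ s, f c = ∑ c ∈ s, g c := by
  by_cases hi : i ∈ s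
  · have hj : j ∈ s.erase i := Finset.mem_erase.2 ⟨hij.symm, hmem.1 hi⟩
    rw [← Finset.add_sum_erase _ f hi, ← Finset.add_sum_erase _ g hi,
      ← Finset.add_sum_erase _ f hj, ← Finset.add_sum_erase _ g hj,
      ← add_assoc, ← add_assoc, hsum]
    congr 1
    apply Finset.sum_congr rfl
    intro c hc
    rcases Finset.mem_erase.1 hc with ⟨hcj, hc2⟩
    rcases Finset.mem_erase.1 hc2 with ⟨hci, hcs⟩
    exact hoff c hcs hci hcj
  · have hjn : ¬ j ∈ s := fun h => hi (hmem.2 h)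
    apply Finset.sum_congr rfl
    intro c hc
    exact hoff c hc (fun e => hi (e ▸ hc)) (fun e => hjn (e ▸ hc))

lemma prod_swap_two (s : Finset (Fin n))
    (f g : Fin n → ℝ) (i j : Fin n) (hij : i ≠ j) (hmem : i ∈ s ↔ j ∈ s)
    (hoff : ∀ c ∈ s, c ≠ i → c ≠ j → f c = g c) (hsum : f i * f j = g i * g j) :
    ∏ c ∈ s, f c = ∏ c ∈ s, g c := by
  by_cases hi : i ∈ s
  · have hj : j ∈ s.erase i := Finset.mem_erase.2 ⟨hij.symm, hmem.1 hi⟩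
    rw [← Finset.mul_prod_erase _ f hi, ← Finset.mul_prod_erase _ g hi,
      ← Finset.mul_prod_erase _ f hj, ← Finset.mul_prod_erase _ g hj,
      ← mul_assoc, ← mul_assoc, hsum]
    congr 1
    apply Finset.prod_congr rfl
    intro c hc
    rcases Finset.mem_erase.1 hc with ⟨hcj, hc2⟩
    rcases Finset.mem_erase.1 hc2 with ⟨hci, hcs⟩
    exact hoff c hcs hci hcj
  · have hjn : ¬ j ∈ s := fun h => hi (hmem.2 h)
    apply Finset.prod_congr rfl
    intro c hc
    exact hoff c hc (fun e => hi (e ▸ hc)) (fun e => hjn (e ▸ hc))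

end Helpers2
section Helpers3

open Finset

variable {n : ℕ}

noncomputable def rhoConst (t : RSType) : ℝ :=
  match t with
  | RSType.B => 1/2
  | RSType.C => 1
  | RSType.D => 0

lemma rho_apply (t : RSType) (c : Fin n) :
    rho n t c = (n : ℝ) - 1 - (c : ℕ) + rhoConst t := by
  have hn0 : 0 < n := c.pos
  have hS : ∑ q ∈ Finset.univ.filter (fun q : Fin n × Fin n => q.1 < q.2),
      ((eps n q.1 - eps n q.2) + (eps n q.1 + eps n q.2)) c
      = 2 * ((n:ℝ) - 1 - (c:ℕ)) := by
    have step : ∀ q ∈ Finset.univ.filter (fun q : Fin n × Fin n => q.1 < q.2),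
        ((eps n q.1 - eps n q.2) + (eps n q.1 + eps n q.2)) c
        = if q.1 = c then (2:ℝ) else 0 := by
      intro q _
      by_cases hq : q.1 = c
      · subst hq
        simp [Pi.add_apply, Pi.sub_apply, eps_self]
        norm_num
      · have : c ≠ q.1 := fun e => hq e.symm
        simp [Pi.add_apply, Pi.sub_apply, eps_ne this, hq]
    rw [Finset.sum_congr rfl step, ← Finset.sum_filter]
    have hset : (Finset.univ.filter (fun q : Fin n × Fin n => q.1 < q.2)).filter
        (fun q => q.1 = c) = (Finset.Ioi c).image (fun j => (c, j)) := by
      ext q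
      simp only [Finset.mem_filter, Finset.mem_univ, true_and, Finset.mem_image,
        Finset.mem_Ioi]
      constructor
      · rintro ⟨h1, h2⟩
        exact ⟨q.2, by rw [← h2]; exact h1, by rw [← h2]⟩
      · rintro ⟨j, hj, he⟩
        rw [← he]; exact ⟨hj, rfl⟩
    rw [hset, Finset.sum_const, Finset.card_image_of_injective _
      (fun a b h => by simpa using congrArg Prod.snd h), Fin.card_Ioi]
    have h1 : (c:ℕ) ≤ n - 1 := by omega
    rw [nsmul_eq_mul, Nat.cast_sub h1, Nat.cast_sub (by omega : 1 ≤ n)]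
    push_cast
    ring
  rcases t with _ | _ | _
  · have hT : ∑ i, eps n i c = 1 := by
      unfold eps
      rw [Finset.sum_eq_single c] <;> simp (config := {contextual := true}) [eq_comm]
    have expand : rho n RSType.B = (1/2 : ℝ) •
        ((∑ q ∈ Finset.univ.filter (fun q : Fin n × Fin n => q.1 < q.2),
          ((eps n q.1 - eps n q.2) + (eps n q.1 + eps n q.2))) + ∑ i, eps n i) := rfl
    rw [expand, Pi.smul_apply, Pi.add_apply, Finset.sum_apply, Finset.sum_apply,
      smul_eq_mul, hS, hT]
    unfold rhoConst; ring
  · have hT : ∑ i, ((2:ℝ) • eps n i) c = 2 := by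
      unfold eps
      rw [Finset.sum_eq_single c] <;>
        simp (config := {contextual := true}) [eq_comm]
    have expand : rho n RSType.C = (1/2 : ℝ) •
        ((∑ q ∈ Finset.univ.filter (fun q : Fin n × Fin n => q.1 < q.2),
          ((eps n q.1 - eps n q.2) + (eps n q.1 + eps n q.2))) + ∑ i, (2:ℝ) • eps n i) := rfl
    rw [expand, Pi.smul_apply, Pi.add_apply, Finset.sum_apply, Finset.sum_apply,
      smul_eq_mul, hS, hT]
    unfold rhoConst; ring
  · have expand : rho n RSType.D = (1/2 : ℝ) •
        ((∑ q ∈ Finset.univ.filter (fun q : Fin n × Fin n => q.1 < q.2),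
          ((eps n q.1 - eps n q.2) + (eps n q.1 + eps n q.2))) + (0 : Fin n → ℝ)) := rfl
    rw [expand, Pi.smul_apply, Pi.add_apply, Finset.sum_apply, Pi.zero_apply,
      smul_eq_mul, hS]
    unfold rhoConst; ring

lemma simpleRoot_internal (t : RSType) (i : Fin n) (h : (i:ℕ)+1 < n) :
    simpleRoot n t i = eps n i - eps n ⟨(i:ℕ)+1, h⟩ := by
  unfold simpleRoot
  rw [if_pos h]
  congr 1
  funext j
  simp [eps, Fin.ext_iff]

lemma simpleRoot_last_B (i : Fin n) (h : ¬((i:ℕ)+1 < n)) :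
    simpleRoot n RSType.B i = eps n i := by
  unfold simpleRoot; rw [if_neg h]

lemma simpleRoot_last_C (i : Fin n) (h : ¬((i:ℕ)+1 < n)) :
    simpleRoot n RSType.C i = (2:ℝ) • eps n i := by
  unfold simpleRoot; rw [if_neg h]

lemma simpleRoot_last_D (i : Fin n) (h : ¬((i:ℕ)+1 < n)) (hn : 2 ≤ n) :
    simpleRoot n RSType.D i = eps n ⟨(i:ℕ)-1, by omega⟩ + eps n i := by
  have hi : (i:ℕ) = n - 1 := by have := i.isLt; omega
  unfold simpleRoot
  rw [if_neg h]
  funext j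
  have hjlt := j.isLt
  simp only [Pi.add_apply, eps, Fin.ext_iff]
  by_cases hj : (j:ℕ) + 1 = (i:ℕ)
  · have h2 : (j:ℕ) = (i:ℕ) - 1 := by omega
    simp [hj, h2]
    omega
  · have h2 : ¬((j:ℕ) = (i:ℕ) - 1) := by omega
    simp [hj, h2]

end Helpers3
section Helpers4

open Finset

def Icond (n k : ℕ) (p : ℕ → ℕ) (i : Fin n) : Prop :=
  ∀ j, 1 ≤ j → j ≤ k → (i : ℕ) + 1 ≠ p j

def Bblk (n : ℕ) (p : ℕ → ℕ) (j : ℕ) : Finset (Fin n) :=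
  Finset.univ.filter (fun c => p j ≤ (c : ℕ) ∧ (c : ℕ) < p (j+1))

noncomputable def Mv (n : ℕ) (p : ℕ → ℕ) (j : ℕ) (v : Fin n → ℝ) : Multiset ℝ :=
  ∑ c ∈ Bblk n p j, {v c}

noncomputable def Av (n : ℕ) (p : ℕ → ℕ) (k : ℕ) (v : Fin n → ℝ) : Multiset ℝ :=
  ∑ c ∈ Bblk n p k, {|v c|}

noncomputable def Cv (n : ℕ) (p : ℕ → ℕ) (k : ℕ) (v : Fin n → ℝ) : ℝ :=
  ∏ c ∈ Bblk n p k, Real.sign (v c)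

def Pint (n : ℕ) (η v : Fin n → ℝ) : Prop :=
  ∀ c, ∃ mm : ℤ, v c - η c = (mm : ℝ)

def GoodEnd (n k : ℕ) (t : RSType) (p : ℕ → ℕ) (η : Fin n → ℝ)
    (g : (Fin n → ℝ) → (Fin n → ℝ)) : Prop :=
  (∀ u v : Fin n → ℝ, ∑ c, |g u c - g v c| = ∑ c, |u c - v c|) ∧
  (∀ u : Fin n → ℝ, ∑ c, (g u c)^2 = ∑ c, (u c)^2) ∧
  (∀ u : Fin n → ℝ, Pint n η u → Pint n η (g u)) ∧
  (∀ j, j < k → ∀ u : Fin n → ℝ, Mv n p j (g u) = Mv n p j u) ∧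
  (∀ u : Fin n → ℝ, Av n p k (g u) = Av n p k u) ∧
  (t = RSType.D → ∀ u : Fin n → ℝ, Cv n p k (g u) = Cv n p k u)

lemma good_one (n k : ℕ) (t : RSType) (p : ℕ → ℕ) (η : Fin n → ℝ) :
    GoodEnd n k t p η id := by
  refine ⟨fun u v => rfl, fun u => rfl, fun u h => h, fun j _ u => rfl, fun u => rfl,
    fun _ u => rfl⟩

lemma good_comp (n k : ℕ) (t : RSType) (p : ℕ → ℕ) (η : Fin n → ℝ)
    (g1 g2 : (Fin n → ℝ) → (Fin n → ℝ))
    (h1 : GoodEnd n k t p η g1) (h2 : GoodEnd n k t p η g2) :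
    GoodEnd n k t p η (g1 ∘ g2) := by
  obtain ⟨a1, b1, c1, d1, e1, f1⟩ := h1
  obtain ⟨a2, b2, c2, d2, e2, f2⟩ := h2
  exact ⟨fun u v => (a1 _ _).trans (a2 u v), fun u => (b1 _).trans (b2 u),
    fun u h => c1 _ (c2 u h), fun j hj u => (d1 j hj _).trans (d2 j hj u),
    fun u => (e1 _).trans (e2 u), fun ht u => ((f1 ht _).trans (f2 ht u))⟩

lemma pairing_rho_simple (n : ℕ) (hn : 2 ≤ n) (t : RSType) (i : Fin n) :
    pairing n (rho n t) (simpleRoot n t i) = 1 := by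
  by_cases h : (i : ℕ) + 1 < n
  · have hne : i ≠ ⟨(i:ℕ)+1, h⟩ := by
      intro e
      have := congrArg (fun z : Fin n => (z : ℕ)) e
      simp at this
    rw [simpleRoot_internal t i h, pairing_sub_eps _ _ _ hne, rho_apply, rho_apply]
    have hv : ((⟨(i:ℕ)+1, h⟩ : Fin n) : ℕ) = (i:ℕ)+1 := rfl
    rw [hv]
    push_cast
    ring
  · have hilt := i.isLt
    have hi : (i:ℕ) = n - 1 := by omega
    have hcast : ((i:ℕ) : ℝ) = (n:ℝ) - 1 := by
      rw [hi, Nat.cast_sub (by omega)]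
      norm_num
    rcases t with _ | _ | _
    · rw [simpleRoot_last_B i h, pairing_eps, rho_apply, hcast]
      unfold rhoConst
      ring
    · rw [simpleRoot_last_C i h, pairing_2eps, rho_apply, hcast]
      unfold rhoConst
      ring
    · have hne : (⟨(i:ℕ)-1, by omega⟩ : Fin n) ≠ i := by
        intro e
        have := congrArg (fun z : Fin n => (z : ℕ)) e
        simp at this
        omega
      rw [simpleRoot_last_D i h hn, pairing_add_eps _ _ _ hne, rho_apply, rho_apply,
        hcast]
      have hv : ((⟨(i:ℕ)-1, by omega⟩ : Fin n) : ℕ) = (i:ℕ)-1 := rfl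
      rw [hv]
      have hcast2 : (((i:ℕ)-1 : ℕ) : ℝ) = (n:ℝ) - 2 := by
        rw [hi]
        rw [Nat.cast_sub (by omega)]
        rw [Nat.cast_sub (by omega)]
        norm_num
        ring
      rw [hcast2]
      unfold rhoConst
      ring

end Helpers4
section Helpers5

open Finset

lemma pmono_aux (k : ℕ) (p : ℕ → ℕ) (hmono : ∀ j, j < k → p j < p (j + 1)) :
    ∀ j1 d, j1 + d ≤ k → p j1 ≤ p (j1 + d) := by
  intro j1 d
  induction d with
  | zero => intro _; simp
  | succ d ih =>
    intro h
    have he : j1 + (d + 1) = (j1 + d) + 1 := by omega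
    rw [he]
    have h1 : p (j1 + d) < p (j1 + d + 1) := hmono _ (by omega)
    have h2 : p j1 ≤ p (j1 + d) := ih (by omega)
    omega

lemma pmono (k : ℕ) (p : ℕ → ℕ) (hmono : ∀ j, j < k → p j < p (j + 1))
    (j1 j2 : ℕ) (h12 : j1 ≤ j2) (h2k : j2 ≤ k) : p j1 ≤ p j2 := by
  obtain ⟨d, rfl⟩ : ∃ d, j2 = j1 + d := ⟨j2 - j1, by omega⟩
  exact pmono_aux k p hmono j1 d h2k

lemma good_gen (n k : ℕ) (hn : 2 ≤ n) (t : RSType) (p : ℕ → ℕ)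
    (hp0 : p 0 = 0) (hmono : ∀ j, j < k → p j < p (j + 1))
    (hpk : p k ≤ n) (hpk1 : p (k + 1) = n) (hpkD : t = RSType.D → p k ≠ n - 1)
    (η : Fin n → ℝ)
    (hη : ∀ i : Fin n, Icond n k p i → pairing n η (simpleRoot n t i) = 1)
    (i : Fin n) (hi : Icond n k p i) :
    GoodEnd n k t p η (sRefl n (simpleRoot n t i)) := by
  by_cases hlt : (i : ℕ) + 1 < n
  · -- internal transposition case
    set i' : Fin n := ⟨(i:ℕ)+1, hlt⟩ with hi'def
    have hvi' : (i' : ℕ) = (i:ℕ)+1 := rfl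
    have hne : i ≠ i' := by
      intro e
      have : (i:ℕ) = (i':ℕ) := congrArg _ e
      omega
    have hroot : simpleRoot n t i = eps n i - eps n i' := simpleRoot_internal t i hlt
    have hs : ∀ (u : Fin n → ℝ) c, sRefl n (simpleRoot n t i) u c =
        if c = i then u i' else if c = i' then u i else u c := by
      intro u c
      rw [hroot]
      exact sRefl_sub_eps u i i' hne c
    have hsi : ∀ u : Fin n → ℝ, sRefl n (simpleRoot n t i) u i = u i' := by
      intro u; rw [hs]; simp
    have hsi' : ∀ u : Fin n → ℝ, sRefl n (simpleRoot n t i) u i' = u i := by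
      intro u; rw [hs, if_neg (Ne.symm hne), if_pos rfl]
    have hso : ∀ (u : Fin n → ℝ) c, c ≠ i → c ≠ i' →
        sRefl n (simpleRoot n t i) u c = u c := by
      intro u c h1 h2; rw [hs, if_neg h1, if_neg h2]
    have hηpair : η i - η i' = 1 := by
      have := hη i hi
      rwa [hroot, pairing_sub_eps _ _ _ hne] at this
    have hmemB : ∀ j, j ≤ k → (i ∈ Bblk n p j ↔ i' ∈ Bblk n p j) := by
      intro j hj
      simp only [Bblk, Finset.mem_filter, Finset.mem_univ, true_and, hvi']
      have h1 : p j ≤ (i:ℕ) ↔ p j ≤ (i:ℕ)+1 := by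
        rcases Nat.eq_zero_or_pos j with h0 | h0
        · subst h0; rw [hp0]; omega
        · have := hi j h0 hj; omega
      have h2 : (i:ℕ) < p (j+1) ↔ (i:ℕ)+1 < p (j+1) := by
        rcases Nat.lt_or_ge j k with hk | hk
        · have := hi (j+1) (by omega) (by omega); omega
        · have hjk : j = k := by omega
          subst hjk; rw [hpk1]
          omega
      constructor
      · rintro ⟨u1, u2⟩; exact ⟨h1.1 u1, h2.1 u2⟩
      · rintro ⟨u1, u2⟩; exact ⟨h1.2 u1, h2.2 u2⟩
    refine ⟨?_, ?_, ?_, ?_, ?_, ?_⟩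
    · intro u v
      refine sum_swap_two Finset.univ _ _ i i' hne (by simp) ?_ ?_
      · intro c _ h1 h2; rw [hso u c h1 h2, hso v c h1 h2]
      · rw [hsi, hsi, hsi', hsi']; exact add_comm _ _
    · intro u
      refine sum_swap_two Finset.univ _ _ i i' hne (by simp) ?_ ?_
      · intro c _ h1 h2; rw [hso u c h1 h2]
      · rw [hsi, hsi']; exact add_comm _ _
    · intro u hu c
      by_cases h1 : c = i
      · subst h1
        obtain ⟨m2, hm2⟩ := hu i'
        exact ⟨m2 - 1, by rw [hsi]; push_cast; linarith⟩
      · by_cases h2 : c = i'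
        · subst h2
          obtain ⟨m1, hm1⟩ := hu i
          exact ⟨m1 + 1, by rw [hsi']; push_cast; linarith⟩
        · obtain ⟨m1, hm1⟩ := hu c
          exact ⟨m1, by rw [hso u c h1 h2]; exact hm1⟩
    · intro j hj u
      unfold Mv
      refine sum_swap_two _ _ _ i i' hne (hmemB j (le_of_lt hj)) ?_ ?_
      · intro c _ h1 h2; rw [hso u c h1 h2]
      · rw [hsi, hsi']; exact add_comm _ _
    · intro u
      unfold Av
      refine sum_swap_two _ _ _ i i' hne (hmemB k le_rfl) ?_ ?_
      · intro c _ h1 h2; rw [hso u c h1 h2]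
      · rw [hsi, hsi']; exact add_comm _ _
    · intro _ u
      unfold Cv
      refine prod_swap_two _ _ _ i i' hne (hmemB k le_rfl) ?_ ?_
      · intro c _ h1 h2; rw [hso u c h1 h2]
      · rw [hsi, hsi']; exact mul_comm _ _
  · -- last simple root case
    have hilt := i.isLt
    have hii : (i:ℕ) = n - 1 := by omega
    have hpkn : p k ≤ n - 1 := by
      rcases Nat.eq_zero_or_pos k with h0 | h0
      · subst h0; rw [hp0]; omega
      · have := hi k h0 le_rfl
        omega
    have hBmid : ∀ j, j < k → ∀ c, c ∈ Bblk n p j → (c : ℕ) < p k := by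
      intro j hj c hc
      rcases Finset.mem_filter.1 hc with ⟨-, -, h2⟩
      have := pmono k p hmono (j+1) k (by omega) le_rfl
      omega
    rcases t with _ | _ | _
    · -- type B
      have hroot : simpleRoot n RSType.B i = eps n i := simpleRoot_last_B i hlt
      have hs : ∀ (u : Fin n → ℝ) c, sRefl n (simpleRoot n RSType.B i) u c =
          if c = i then -u c else u c := by
        intro u c; rw [hroot]; exact sRefl_eps u i c
      have hso : ∀ (u : Fin n → ℝ) c, c ≠ i → sRefl n (simpleRoot n RSType.B i) u c = u c := by
        intro u c h1; rw [hs, if_neg h1]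
    
      have hsi : ∀ u : Fin n → ℝ, sRefl n (simpleRoot n RSType.B i) u i = -u i := by
        intro u; rw [hs, if_pos rfl]
      have hη1 : η i = 1/2 := by
        have := hη i hi
        rw [hroot, pairing_eps] at this
        linarith
      refine ⟨?_, ?_, ?_, ?_, ?_, ?_⟩
      · intro u v
        apply Finset.sum_congr rfl
        intro c _
        by_cases h1 : c = i
        · rw [h1, hsi, hsi, show -u i - -v i = -(u i - v i) from by ring, abs_neg]
        · rw [hso u c h1, hso v c h1]
      · intro u
        apply Finset.sum_congr rfl
        intro c _
        by_cases h1 : c = i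
        · rw [h1, hsi]; ring
        · rw [hso u c h1]
      · intro u hu c
        by_cases h1 : c = i
        · obtain ⟨m1, hm1⟩ := hu i
          exact ⟨-m1 - 1, by rw [h1, hsi]; push_cast; linarith⟩
        · obtain ⟨m1, hm1⟩ := hu c
          exact ⟨m1, by rw [hso u c h1]; exact hm1⟩
      · intro j hj u
        unfold Mv
        apply Finset.sum_congr rfl
        intro c hc
        have := hBmid j hj c hc
        have hne : c ≠ i := by
          intro e; rw [e] at this; omega
        rw [hso u c hne]
      · intro u
        unfold Av
        apply Finset.sum_congr rfl
        intro c _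
        by_cases h1 : c = i
        · rw [h1, hsi, abs_neg]
        · rw [hso u c h1]
      · intro habs
        exact absurd habs (by decide)
    · -- type C
      have hroot : simpleRoot n RSType.C i = (2:ℝ) • eps n i := simpleRoot_last_C i hlt
      have hs : ∀ (u : Fin n → ℝ) c, sRefl n (simpleRoot n RSType.C i) u c =
          if c = i then -u c else u c := by
        intro u c; rw [hroot]; exact sRefl_2eps u i c
      have hso : ∀ (u : Fin n → ℝ) c, c ≠ i → sRefl n (simpleRoot n RSType.C i) u c = u c := by
        intro u c h1; rw [hs, if_neg h1]
      have hsi : ∀ u : Fin n → ℝ, sRefl n (simpleRoot n RSType.C i) u i = -u i := by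
        intro u; rw [hs, if_pos rfl]
      have hη1 : η i = 1 := by
        have := hη i hi
        rwa [hroot, pairing_2eps] at this
      refine ⟨?_, ?_, ?_, ?_, ?_, ?_⟩
      · intro u v
        apply Finset.sum_congr rfl
        intro c _
        by_cases h1 : c = i
        · rw [h1, hsi, hsi, show -u i - -v i = -(u i - v i) from by ring, abs_neg]
        · rw [hso u c h1, hso v c h1]
      · intro u
        apply Finset.sum_congr rfl
        intro c _
        by_cases h1 : c = i
        · rw [h1, hsi]; ring
        · rw [hso u c h1]
      · intro u hu c
        by_cases h1 : c = i
        · obtain ⟨m1, hm1⟩ := hu i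
          exact ⟨-m1 - 2, by rw [h1, hsi]; push_cast; linarith⟩
        · obtain ⟨m1, hm1⟩ := hu c
          exact ⟨m1, by rw [hso u c h1]; exact hm1⟩
      · intro j hj u
        unfold Mv
        apply Finset.sum_congr rfl
        intro c hc
        have := hBmid j hj c hc
        have hne : c ≠ i := by
          intro e; rw [e] at this; omega
        rw [hso u c hne]
      · intro u
        unfold Av
        apply Finset.sum_congr rfl
        intro c _
        by_cases h1 : c = i
        · rw [h1, hsi, abs_neg]
        · rw [hso u c h1]
      · intro habs
        exact absurd habs (by decide)
    · -- type D
      have hpkD2 : p k ≤ n - 2 := by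
        have := hpkD rfl
        omega
      set i2 : Fin n := ⟨n-2, by omega⟩ with hi2def
      have hvi2 : (i2 : ℕ) = n - 2 := rfl
      have hne2 : i2 ≠ i := by
        intro e
        have : (i2:ℕ) = (i:ℕ) := congrArg _ e
        omega
      have hroot : simpleRoot n RSType.D i = eps n i2 + eps n i := by
        rw [simpleRoot_last_D i hlt hn,
          show (⟨(i:ℕ)-1, by omega⟩ : Fin n) = i2 from Fin.ext (show (i:ℕ) - 1 = n - 2 by omega)]
      have hs : ∀ (u : Fin n → ℝ) c, sRefl n (simpleRoot n RSType.D i) u c =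
          if c = i2 then -u i else if c = i then -u i2 else u c := by
        intro u c; rw [hroot]; exact sRefl_add_eps u i2 i hne2 c
      have hsi2 : ∀ u : Fin n → ℝ, sRefl n (simpleRoot n RSType.D i) u i2 = -u i := by
        intro u; rw [hs, if_pos rfl]
      have hsi : ∀ u : Fin n → ℝ, sRefl n (simpleRoot n RSType.D i) u i = -u i2 := by
        intro u; rw [hs, if_neg (Ne.symm hne2), if_pos rfl]
      have hso : ∀ (u : Fin n → ℝ) c, c ≠ i2 → c ≠ i →
          sRefl n (simpleRoot n RSType.D i) u c = u c := by
        intro u c h1 h2; rw [hs, if_neg h1, if_neg h2]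
      have hηpair : η i2 + η i = 1 := by
        have := hη i hi
        rwa [hroot, pairing_add_eps _ _ _ hne2] at this
      have hi2mem : i2 ∈ Bblk n p k := by
        simp only [Bblk, Finset.mem_filter, Finset.mem_univ, true_and, hvi2, hpk1]
        omega
      have himem : i ∈ Bblk n p k := by
        simp only [Bblk, Finset.mem_filter, Finset.mem_univ, true_and, hii, hpk1]
        omega
      refine ⟨?_, ?_, ?_, ?_, ?_, ?_⟩
      · intro u v
        refine sum_swap_two Finset.univ _ _ i2 i hne2 (by simp) ?_ ?_
        · intro c _ h1 h2; rw [hso u c h1 h2, hso v c h1 h2]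
        · rw [hsi2, hsi2, hsi, hsi,
            show -u i - -v i = -(u i - v i) from by ring,
            show -u i2 - -v i2 = -(u i2 - v i2) from by ring, abs_neg, abs_neg]
          exact add_comm _ _
      · intro u
        refine sum_swap_two Finset.univ _ _ i2 i hne2 (by simp) ?_ ?_
        · intro c _ h1 h2; rw [hso u c h1 h2]
        · rw [hsi2, hsi]; ring
      · intro u hu c
        by_cases h1 : c = i2
        · obtain ⟨m1, hm1⟩ := hu i
          exact ⟨-m1 - 1, by rw [h1, hsi2]; push_cast; linarith⟩
        · by_cases h2 : c = i
          · obtain ⟨m1, hm1⟩ := hu i2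
            exact ⟨-m1 - 1, by rw [h2, hsi]; push_cast; linarith⟩
          · obtain ⟨m1, hm1⟩ := hu c
            exact ⟨m1, by rw [hso u c h1 h2]; exact hm1⟩
      · intro j hj u
        unfold Mv
        apply Finset.sum_congr rfl
        intro c hc
        have := hBmid j hj c hc
        have hc1 : c ≠ i2 := by intro e; rw [e] at this; omega
        have hc2 : c ≠ i := by intro e; rw [e] at this; omega
        rw [hso u c hc1 hc2]
      · intro u
        unfold Av
        refine sum_swap_two _ _ _ i2 i hne2 (iff_of_true hi2mem himem) ?_ ?_
        · intro c _ h1 h2; rw [hso u c h1 h2]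
        · rw [hsi2, hsi, abs_neg, abs_neg]; exact add_comm _ _
      · intro _ u
        unfold Cv
        refine prod_swap_two _ _ _ i2 i hne2 (iff_of_true hi2mem himem) ?_ ?_
        · intro c _ h1 h2; rw [hso u c h1 h2]
        · rw [hsi2, hsi, Real.sign_neg, Real.sign_neg]; ring

end Helpers5
section Helpers6

open Finset

lemma chain_lemma (n k : ℕ) (t : RSType) (p : ℕ → ℕ)
    (hmono : ∀ j, j < k → p j < p (j + 1)) (hpk : p k ≤ n) (hpk1 : p (k + 1) = n)
    (v : Fin n → ℝ)
    (hdom : ∀ i : Fin n, Icond n k p i → 0 ≤ pairing n v (simpleRoot n t i))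
    (j : ℕ) (hj : j ≤ k) :
    ∀ (c c' : Fin n), p j ≤ (c:ℕ) → (c:ℕ) ≤ (c':ℕ) → (c':ℕ) < p (j+1) →
      v c' ≤ v c := by
  have hup : p (j+1) ≤ n := by
    rcases Nat.lt_or_ge j k with h | h
    · exact le_trans (pmono k p hmono (j+1) k (by omega) le_rfl) hpk
    · have : j = k := by omega
      subst this; omega
  have main : ∀ (d a : ℕ), p j ≤ a → a + d < p (j+1) →
      ∀ (h1 : a + d < n) (h2 : a < n), v ⟨a+d, h1⟩ ≤ v ⟨a, h2⟩ := by
    intro d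
    induction d with
    | zero =>
      intro a _ _ h1 h2
      have : (⟨a+0, h1⟩ : Fin n) = ⟨a, h2⟩ := Fin.ext (show a + 0 = a by omega)
      rw [this]
    | succ d ih =>
      intro a ha had h1 h2
      have had' : a + d < p (j+1) := by omega
      have hd1 : a + d < n := by omega
      have step : v ⟨a+(d+1), h1⟩ ≤ v ⟨a+d, hd1⟩ := by
        set i : Fin n := ⟨a+d, hd1⟩ with hidef
        have hvi : (i:ℕ) = a + d := rfl
        have hint : (i:ℕ) + 1 < n := by
          have : a + (d+1) < p (j+1) := had
          omega
        have hic : Icond n k p i := by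
          intro l hl1 hlk
          rw [hvi]
          rcases Nat.lt_or_ge l (j+1) with hlj | hlj
          · have : p l ≤ p j := pmono k p hmono l j (by omega) hj
            omega
          · have : p (j+1) ≤ p l := pmono k p hmono (j+1) l hlj hlk
            have : a + (d+1) < p (j+1) := had
            omega
        have hd := hdom i hic
        rw [simpleRoot_internal t i hint, pairing_sub_eps _ _ _ (by
          intro e
          have : (i:ℕ) = ((⟨(i:ℕ)+1, hint⟩ : Fin n) : ℕ) := congrArg _ e
          simp at this)] at hd
        have he : (⟨(i:ℕ)+1, hint⟩ : Fin n) = ⟨a+(d+1), h1⟩ :=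
          Fin.ext (show (a+d) + 1 = a+(d+1) by omega)
        rw [he] at hd
        linarith
      exact le_trans step (ih a ha had' hd1 h2)
  intro c c' hc hcc' hc'
  have h2 : (c:ℕ) < n := c.isLt
  have h1 : (c:ℕ) + ((c':ℕ) - (c:ℕ)) < n := by omega
  have := main ((c':ℕ) - (c:ℕ)) (c:ℕ) hc (by omega) h1 h2
  have he : (⟨(c:ℕ) + ((c':ℕ) - (c:ℕ)), h1⟩ : Fin n) = c' :=
    Fin.ext (show (c:ℕ) + ((c':ℕ) - (c:ℕ)) = (c':ℕ) by omega)
  have he2 : (⟨(c:ℕ), h2⟩ : Fin n) = c := Fin.ext rfl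
  rwa [he, he2] at this

lemma seg_pin (n lo P : ℕ) (v η : Fin n → ℝ)
    (hvch : ∀ (c c' : Fin n), lo ≤ (c:ℕ) → (c:ℕ) ≤ (c':ℕ) → (c':ℕ) < P → v c' ≤ v c)
    (hηch : ∀ (c c' : Fin n), lo ≤ (c:ℕ) → (c:ℕ) ≤ (c':ℕ) → (c':ℕ) < P → η c' ≤ η c) :
    ∀ (d a : ℕ), lo ≤ a → a + d = P → P ≤ n →
    (∑ c ∈ Finset.univ.filter (fun c : Fin n => a ≤ (c:ℕ) ∧ (c:ℕ) < P),
        ({v c} : Multiset ℝ))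
      = ∑ c ∈ Finset.univ.filter (fun c : Fin n => a ≤ (c:ℕ) ∧ (c:ℕ) < P), {η c} →
    ∀ c : Fin n, a ≤ (c:ℕ) → (c:ℕ) < P → v c = η c := by
  intro d
  induction d with
  | zero =>
    intro a _ haP _ _ c hc1 hc2
    omega
  | succ d ih =>
    intro a hloa haP hPn hmset c hc1 hc2
    have haP' : a < P := by omega
    have han : a < n := by omega
    set ca : Fin n := ⟨a, han⟩ with hcadef
    have hva : (ca:ℕ) = a := rfl
    have hsplit : Finset.univ.filter (fun c : Fin n => a ≤ (c:ℕ) ∧ (c:ℕ) < P)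
        = insert ca (Finset.univ.filter (fun c : Fin n => a+1 ≤ (c:ℕ) ∧ (c:ℕ) < P)) := by
      ext c'
      simp only [Finset.mem_filter, Finset.mem_univ, true_and, Finset.mem_insert,
        Fin.ext_iff, hva]
      omega
    have hnotmem : ca ∉ Finset.univ.filter (fun c : Fin n => a+1 ≤ (c:ℕ) ∧ (c:ℕ) < P) := by
      simp only [Finset.mem_filter, Finset.mem_univ, true_and, hva]
      omega
    have hmem_eta : ∃ c' : Fin n, (a ≤ (c':ℕ) ∧ (c':ℕ) < P) ∧ η ca = v c' := by
      have h1 : η ca ∈ ∑ c ∈ Finset.univ.filter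
          (fun c : Fin n => a ≤ (c:ℕ) ∧ (c:ℕ) < P), ({η c} : Multiset ℝ) := by
        rw [Multiset.mem_sum]
        exact ⟨ca, by simp [hva]; omega, Multiset.mem_singleton.2 rfl⟩
      rw [← hmset, Multiset.mem_sum] at h1
      obtain ⟨c', hc', hin⟩ := h1
      rcases Finset.mem_filter.1 hc' with ⟨-, hh⟩
      exact ⟨c', hh, Multiset.mem_singleton.1 hin⟩
    have hmem_v : ∃ c' : Fin n, (a ≤ (c':ℕ) ∧ (c':ℕ) < P) ∧ v ca = η c' := by
      have h1 : v ca ∈ ∑ c ∈ Finset.univ.filter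
          (fun c : Fin n => a ≤ (c:ℕ) ∧ (c:ℕ) < P), ({v c} : Multiset ℝ) := by
        rw [Multiset.mem_sum]
        exact ⟨ca, by simp [hva]; omega, Multiset.mem_singleton.2 rfl⟩
      rw [hmset, Multiset.mem_sum] at h1
      obtain ⟨c', hc', hin⟩ := h1
      rcases Finset.mem_filter.1 hc' with ⟨-, hh⟩
      exact ⟨c', hh, Multiset.mem_singleton.1 hin⟩
    have heq : v ca = η ca := by
      obtain ⟨c1, ⟨hc1a, hc1P⟩, he1⟩ := hmem_eta
      obtain ⟨c2, ⟨hc2a, hc2P⟩, he2⟩ := hmem_v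
      have l1 : η ca ≤ v ca := by
        rw [he1]
        exact hvch ca c1 (by omega) (by rw [hva]; omega) hc1P
      have l2 : v ca ≤ η ca := by
        rw [he2]
        exact hηch ca c2 (by omega) (by rw [hva]; omega) hc2P
      linarith
    have hmset' : (∑ c ∈ Finset.univ.filter
          (fun c : Fin n => a+1 ≤ (c:ℕ) ∧ (c:ℕ) < P), ({v c} : Multiset ℝ))
        = ∑ c ∈ Finset.univ.filter
          (fun c : Fin n => a+1 ≤ (c:ℕ) ∧ (c:ℕ) < P), {η c} := by
      have := hmset
      rw [hsplit, Finset.sum_insert hnotmem, Finset.sum_insert hnotmem, heq] at this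
      exact add_left_cancel this
    by_cases hca : (c:ℕ) = a
    · have : c = ca := Fin.ext (by rw [hva]; omega)
      rw [this, heq]
    · exact ih (a+1) (by omega) (by omega) hPn hmset' c (by omega) hc2

lemma pin_lemma (n k : ℕ) (hn : 2 ≤ n) (t : RSType) (p : ℕ → ℕ)
    (hp0 : p 0 = 0) (hmono : ∀ j, j < k → p j < p (j + 1))
    (hpk : p k ≤ n) (hpk1 : p (k + 1) = n) (hpkD : t = RSType.D → p k ≠ n - 1)
    (η v : Fin n → ℝ)
    (hη : ∀ i : Fin n, Icond n k p i → pairing n η (simpleRoot n t i) = 1)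
    (hdom : ∀ i : Fin n, Icond n k p i → 0 ≤ pairing n v (simpleRoot n t i))
    (hM : ∀ j, j < k → Mv n p j v = Mv n p j η)
    (hA : Av n p k v = Av n p k η)
    (hC : t = RSType.D → Cv n p k v = Cv n p k η) :
    v = η := by
  have hηdom : ∀ i : Fin n, Icond n k p i → 0 ≤ pairing n η (simpleRoot n t i) := by
    intro i hi; rw [hη i hi]; norm_num
  have hcov : ∀ c : Fin n, ∃ j, j ≤ k ∧ p j ≤ (c:ℕ) ∧ (c:ℕ) < p (j+1) := by
    have aux : ∀ jj (cc : ℕ), jj ≤ k+1 → cc < p jj →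
        ∃ j, j < jj ∧ p j ≤ cc ∧ cc < p (j+1) := by
      intro jj
      induction jj with
      | zero => intro cc _ hcc; rw [hp0] at hcc; omega
      | succ jj ih =>
        intro cc hjj hcc
        by_cases hple : p jj ≤ cc
        · exact ⟨jj, by omega, hple, hcc⟩
        · obtain ⟨j, h1, h2, h3⟩ := ih cc (by omega) (by omega)
          exact ⟨j, by omega, h2, h3⟩
    intro c
    obtain ⟨j, h1, h2, h3⟩ := aux (k+1) (c:ℕ) le_rfl (by rw [hpk1]; exact c.isLt)
    exact ⟨j, by omega, h2, h3⟩
  funext c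
  obtain ⟨j, hjk, hc1, hc2⟩ := hcov c
  rcases Nat.lt_or_ge j k with hjlt | hjge
  · -- middle block
    have hup : p (j+1) ≤ n :=
      le_trans (pmono k p hmono (j+1) k (by omega) le_rfl) hpk
    have hmset := hM j hjlt
    unfold Mv Bblk at hmset
    exact seg_pin n (p j) (p (j+1)) v η
      (chain_lemma n k t p hmono hpk hpk1 v hdom j (by omega))
      (chain_lemma n k t p hmono hpk hpk1 η hηdom j (by omega))
      (p (j+1) - p j) (p j) le_rfl
      (by have := pmono k p hmono j (j+1) (by omega) (by omega); omega)
      hup hmset c hc1 hc2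
  · -- last block
    have hjk' : j = k := by omega
    rw [hjk'] at hc1 hc2
    have hpklt : p k < n := by
      have := c.isLt
      omega
    have hilast : n - 1 < n := by omega
    set ilast : Fin n := ⟨n-1, hilast⟩ with hilastdef
    have hvilast : (ilast : ℕ) = n - 1 := rfl
    have hlastnotlt : ¬ ((ilast:ℕ) + 1 < n) := by omega
    have hiclast : Icond n k p ilast := by
      intro l hl1 hlk
      have := pmono k p hmono l k hlk le_rfl
      rw [hvilast]
      omega
    have hchv := chain_lemma n k t p hmono hpk hpk1 v hdom k le_rfl
    have hchη := chain_lemma n k t p hmono hpk hpk1 η hηdom k le_rfl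
    -- establish nonnegativity on the last block for v and η
    have key : (∀ c' : Fin n, p k ≤ (c':ℕ) → (c':ℕ) < p (k+1) → 0 ≤ v c')
        ∧ (∀ c' : Fin n, p k ≤ (c':ℕ) → (c':ℕ) < p (k+1) → 0 ≤ η c') := by
      rcases t with _ | _ | _
      · -- B
        have hv0 : 0 ≤ v ilast := by
          have := hdom ilast hiclast
          rw [simpleRoot_last_B ilast hlastnotlt, pairing_eps] at this
          linarith
        have hη0 : 0 ≤ η ilast := by
          have := hη ilast hiclast
          rw [simpleRoot_last_B ilast hlastnotlt, pairing_eps] at this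
          linarith
        constructor
        · intro c' h1 h2
          exact le_trans hv0 (hchv c' ilast h1 (by rw [hvilast]; omega)
            (by rw [hvilast, hpk1]; omega))
        · intro c' h1 h2
          exact le_trans hη0 (hchη c' ilast h1 (by rw [hvilast]; omega)
            (by rw [hvilast, hpk1]; omega))
      · -- C
        have hv0 : 0 ≤ v ilast := by
          have := hdom ilast hiclast
          rwa [simpleRoot_last_C ilast hlastnotlt, pairing_2eps] at this
        have hη0 : 0 ≤ η ilast := by
          have := hη ilast hiclast
          rw [simpleRoot_last_C ilast hlastnotlt, pairing_2eps] at this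
          linarith
        constructor
        · intro c' h1 h2
          exact le_trans hv0 (hchv c' ilast h1 (by rw [hvilast]; omega)
            (by rw [hvilast, hpk1]; omega))
        · intro c' h1 h2
          exact le_trans hη0 (hchη c' ilast h1 (by rw [hvilast]; omega)
            (by rw [hvilast, hpk1]; omega))
      · -- D
        have hpk2 : p k ≤ n - 2 := by
          have := hpkD rfl
          omega
        have hi2lt : n - 2 < n := by omega
        set i2 : Fin n := ⟨n-2, hi2lt⟩ with hi2def
        have hvi2 : (i2 : ℕ) = n - 2 := rfl
        have hne2 : i2 ≠ ilast := by
          intro e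
          have : (i2:ℕ) = (ilast:ℕ) := congrArg _ e
          omega
        have hrootD : simpleRoot n RSType.D ilast = eps n i2 + eps n ilast := by
          rw [simpleRoot_last_D ilast hlastnotlt hn,
            show (⟨(ilast:ℕ)-1, by omega⟩ : Fin n) = i2 from
              Fin.ext (show (ilast:ℕ) - 1 = n - 2 by omega)]
        have hi2int : (i2:ℕ) + 1 < n := by omega
        have hici2 : Icond n k p i2 := by
          intro l hl1 hlk
          have := pmono k p hmono l k hlk le_rfl
          rw [hvi2]
          omega
        have hrooti2 : simpleRoot n RSType.D i2 = eps n i2 - eps n ⟨(i2:ℕ)+1, hi2int⟩ :=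
          simpleRoot_internal _ i2 hi2int
        have hi2succ : (⟨(i2:ℕ)+1, hi2int⟩ : Fin n) = ilast :=
          Fin.ext (show (i2:ℕ)+1 = n-1 by omega)
        have hd1 : 0 ≤ v i2 + v ilast := by
          have := hdom ilast hiclast
          rwa [hrootD, pairing_add_eps _ _ _ hne2] at this
        have hd2 : 0 ≤ v i2 - v ilast := by
          have := hdom i2 hici2
          rwa [hrooti2, pairing_sub_eps _ _ _ (by
            intro e
            have : (i2:ℕ) = (i2:ℕ)+1 := congrArg Fin.val e
            omega), hi2succ] at this
        have hηd1 : η i2 + η ilast = 1 := by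
          have := hη ilast hiclast
          rwa [hrootD, pairing_add_eps _ _ _ hne2] at this
        have hηd2 : η i2 - η ilast = 1 := by
          have := hη i2 hici2
          rwa [hrooti2, pairing_sub_eps _ _ _ (by
            intro e
            have : (i2:ℕ) = (i2:ℕ)+1 := congrArg Fin.val e
            omega), hi2succ] at this
        have hηlast : η ilast = 0 := by linarith
        have hηi2 : η i2 = 1 := by linarith
        have hilastmem : ilast ∈ Bblk n p k := by
          simp only [Bblk, Finset.mem_filter, Finset.mem_univ, true_and, hvilast, hpk1]
          omega
        have hCη : Cv n p k η = 0 := by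
          unfold Cv
          rw [Finset.prod_eq_zero hilastmem (by rw [hηlast, Real.sign_zero])]
        have hCv : Cv n p k v = 0 := by rw [hC rfl, hCη]
        obtain ⟨c0, hc0mem, hc0⟩ := by
          unfold Cv at hCv
          exact Finset.prod_eq_zero_iff.1 hCv
        have hc0zero : v c0 = 0 := by
          rcases Real.sign_eq_zero_iff.1 hc0 with h
          exact h
        have hvlast : 0 ≤ v ilast := by
          by_contra hneg
          push_neg at hneg
          rcases Finset.mem_filter.1 hc0mem with ⟨-, hc0a, hc0b⟩
          by_cases hc0last : c0 = ilast
          · rw [hc0last] at hc0zero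
            linarith
          · have hc0le : (c0:ℕ) ≤ n - 2 := by
              have := c0.isLt
              have : (c0:ℕ) ≠ n - 1 := fun e => hc0last (Fin.ext (by rw [hvilast]; exact e))
              omega
            have : v i2 ≤ v c0 := hchv c0 i2 hc0a (by rw [hvi2]; omega)
              (by rw [hvi2, hpk1]; omega)
            linarith
        constructor
        · intro c' h1 h2
          by_cases hc'last : c' = ilast
          · rw [hc'last]; exact hvlast
          · have hc'le : (c':ℕ) ≤ n - 2 := by
              have := c'.isLt
              have : (c':ℕ) ≠ n - 1 := fun e => hc'last (Fin.ext (by rw [hvilast]; exact e))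
              rw [hpk1] at h2
              omega
            have : v i2 ≤ v c' := hchv c' i2 h1 (by rw [hvi2]; omega)
              (by rw [hvi2, hpk1]; omega)
            linarith
        · intro c' h1 h2
          by_cases hc'last : c' = ilast
          · rw [hc'last, hηlast]
          · have hc'le : (c':ℕ) ≤ n - 2 := by
              have := c'.isLt
              have : (c':ℕ) ≠ n - 1 := fun e => hc'last (Fin.ext (by rw [hvilast]; exact e))
              rw [hpk1] at h2
              omega
            have : η i2 ≤ η c' := hchη c' i2 h1 (by rw [hvi2]; omega)
              (by rw [hvi2, hpk1]; omega)
            linarith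
    obtain ⟨hvnn, hηnn⟩ := key
    have hmset : (∑ c' ∈ Finset.univ.filter
          (fun c' : Fin n => p k ≤ (c':ℕ) ∧ (c':ℕ) < p (k+1)), ({v c'} : Multiset ℝ))
        = ∑ c' ∈ Finset.univ.filter
          (fun c' : Fin n => p k ≤ (c':ℕ) ∧ (c':ℕ) < p (k+1)), {η c'} := by
      have e1 : ∀ c' ∈ Finset.univ.filter
          (fun c' : Fin n => p k ≤ (c':ℕ) ∧ (c':ℕ) < p (k+1)),
          ({v c'} : Multiset ℝ) = {|v c'|} := by
        intro c' hc'
        rcases Finset.mem_filter.1 hc' with ⟨-, h1, h2⟩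
        rw [abs_of_nonneg (hvnn c' h1 h2)]
      have e2 : ∀ c' ∈ Finset.univ.filter
          (fun c' : Fin n => p k ≤ (c':ℕ) ∧ (c':ℕ) < p (k+1)),
          ({η c'} : Multiset ℝ) = {|η c'|} := by
        intro c' hc'
        rcases Finset.mem_filter.1 hc' with ⟨-, h1, h2⟩
        rw [abs_of_nonneg (hηnn c' h1 h2)]
      rw [Finset.sum_congr rfl e1, Finset.sum_congr rfl e2]
      have := hA
      unfold Av Bblk at this
      exact this
    exact seg_pin n (p k) (p (k+1)) v η
      (chain_lemma n k t p hmono hpk hpk1 v hdom k le_rfl)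
      (chain_lemma n k t p hmono hpk hpk1 η hηdom k le_rfl)
      (p (k+1) - p k) (p k) le_rfl (by rw [hpk1]; omega) (by rw [hpk1])
      hmset c hc1 hc2

end Helpers6
section Helpers7

open Finset

noncomputable def thv (n : ℕ) : Fin n → ℝ := fun c => 2*((n:ℝ) - 1 - (c:ℕ)) + 1

noncomputable def gf (n : ℕ) (η v : Fin n → ℝ) : ℝ := ∑ c, thv n c * (v c - η c)

noncomputable def Creal (n : ℕ) (η : Fin n → ℝ) : ℝ :=
  ∑ c, thv n c * (Real.sqrt (∑ c', (η c')^2) + |η c|)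

lemma thv_ge_one {n : ℕ} (c : Fin n) : 1 ≤ thv n c := by
  unfold thv
  have h1 : (c:ℕ) < n := c.isLt
  have : ((c:ℕ):ℝ) ≤ (n:ℝ) - 1 := by
    have : ((c:ℕ):ℝ) + 1 ≤ (n:ℝ) := by exact_mod_cast h1
    linarith
  linarith

lemma sum_univ_one_split {n : ℕ} (f : Fin n → ℝ) (i : Fin n) :
    ∑ c, f c = f i + ∑ c ∈ Finset.univ.erase i, f c :=
  (Finset.add_sum_erase _ f (Finset.mem_univ i)).symm

lemma gf_int {n : ℕ} (η v : Fin n → ℝ) (h : Pint n η v) :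
    ∃ mm : ℤ, gf n η v = (mm : ℝ) := by
  have hch : ∀ c : Fin n, ∃ mm : ℤ, v c - η c = (mm : ℝ) := h
  choose mf hmf using hch
  refine ⟨∑ c : Fin n, (2*((n:ℤ) - 1 - ((c:ℕ):ℤ)) + 1) * mf c, ?_⟩
  unfold gf
  push_cast
  apply Finset.sum_congr rfl
  intro c _
  rw [hmf c]
  unfold thv
  push_cast
  ring

lemma gf_bound {n : ℕ} (η v : Fin n → ℝ) (h : ∑ c, (v c)^2 = ∑ c, (η c)^2) :
    gf n η v ≤ Creal n η := by
  unfold gf Creal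
  apply Finset.sum_le_sum
  intro c _
  have hth : (0:ℝ) ≤ thv n c := le_trans zero_le_one (thv_ge_one c)
  apply mul_le_mul_of_nonneg_left _ hth
  have h1 : |v c| ≤ Real.sqrt (∑ c', (η c')^2) := by
    rw [← h, ← Real.sqrt_sq_eq_abs]
    apply Real.sqrt_le_sqrt
    exact Finset.single_le_sum (fun c' _ => sq_nonneg (v c')) (Finset.mem_univ c)
  have h2 : v c - η c ≤ |v c| + |η c| := by
    have := abs_nonneg (v c)
    have := le_abs_self (v c)
    have := neg_abs_le (η c)
    linarith
  linarith

lemma int_lt_le_neg_one (q : ℤ) (x : ℝ) (he : x = (q:ℝ)) (hx : x < 0) : x ≤ -1 := by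
  have h1 : (q:ℝ) < 0 := he ▸ hx
  have hq : q < 0 := by exact_mod_cast h1
  have hq2 : q ≤ -1 := by omega
  have : (q:ℝ) ≤ -1 := by exact_mod_cast hq2
  rw [he]; exact this

lemma step_facts (n k : ℕ) (hn : 2 ≤ n) (t : RSType) (p : ℕ → ℕ)
    (hp0 : p 0 = 0) (hmono : ∀ j, j < k → p j < p (j + 1))
    (hpk : p k ≤ n) (hpk1 : p (k + 1) = n) (hpkD : t = RSType.D → p k ≠ n - 1)
    (η : Fin n → ℝ)
    (hη : ∀ i : Fin n, Icond n k p i → pairing n η (simpleRoot n t i) = 1)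
    (y : Fin n → ℝ)
    (hydom : ∀ i : Fin n, Icond n k p i → 0 ≤ pairing n y (simpleRoot n t i))
    (v : Fin n → ℝ) (h1 : Pint n η v) (i : Fin n) (hic : Icond n k p i)
    (hneg : pairing n v (simpleRoot n t i) < 0) :
    gf n η v + 1 ≤ gf n η (sRefl n (simpleRoot n t i) v) ∧
    ∑ c, |y c - sRefl n (simpleRoot n t i) v c| ≤ ∑ c, |y c - v c| := by
  by_cases hlt : (i : ℕ) + 1 < n
  · -- internal
    set i' : Fin n := ⟨(i:ℕ)+1, hlt⟩ with hi'def
    have hvi' : (i' : ℕ) = (i:ℕ)+1 := rfl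
    have hne : i ≠ i' := by
      intro e
      have : (i:ℕ) = (i':ℕ) := congrArg _ e
      omega
    have hroot : simpleRoot n t i = eps n i - eps n i' := simpleRoot_internal t i hlt
    have hs : ∀ c, sRefl n (simpleRoot n t i) v c =
        if c = i then v i' else if c = i' then v i else v c := by
      intro c; rw [hroot]; exact sRefl_sub_eps v i i' hne c
    have hsi : sRefl n (simpleRoot n t i) v i = v i' := by rw [hs]; simp
    have hsi' : sRefl n (simpleRoot n t i) v i' = v i := by
      rw [hs, if_neg (Ne.symm hne), if_pos rfl]
    have hso : ∀ c, c ≠ i → c ≠ i' → sRefl n (simpleRoot n t i) v c = v c := by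
      intro c hc1 hc2; rw [hs, if_neg hc1, if_neg hc2]
    have hηd : η i - η i' = 1 := by
      have := hη i hic
      rwa [hroot, pairing_sub_eps _ _ _ hne] at this
    have hyd : 0 ≤ y i - y i' := by
      have := hydom i hic
      rwa [hroot, pairing_sub_eps _ _ _ hne] at this
    have hvd : v i - v i' < 0 := by
      have := hneg
      rwa [hroot, pairing_sub_eps _ _ _ hne] at this
    have hvint : v i' - v i ≥ 1 := by
      obtain ⟨m1, hm1⟩ := h1 i
      obtain ⟨m2, hm2⟩ := h1 i'
      have he : v i - v i' = ((m1 - m2 + 1 : ℤ) : ℝ) := by push_cast; linarith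
      have := int_lt_le_neg_one _ _ he hvd
      linarith
    constructor
    · have hth : thv n i - thv n i' = 2 := by
        unfold thv
        rw [hvi']
        push_cast
        ring
      unfold gf
      rw [sum_univ_two_split (fun c => thv n c * (sRefl n (simpleRoot n t i) v c - η c)) i i' hne,
        sum_univ_two_split (fun c => thv n c * (v c - η c)) i i' hne]
      have hrest : ∑ c ∈ (Finset.univ.erase i).erase i',
          thv n c * (sRefl n (simpleRoot n t i) v c - η c)
          = ∑ c ∈ (Finset.univ.erase i).erase i', thv n c * (v c - η c) := by
        apply Finset.sum_congr rfl
        intro c hc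
        rcases Finset.mem_erase.1 hc with ⟨hc2, hc3⟩
        rcases Finset.mem_erase.1 hc3 with ⟨hc1, -⟩
        rw [hso c hc1 hc2]
      rw [hrest, hsi, hsi']
      have key : thv n i * (v i' - η i) + thv n i' * (v i - η i')
          - (thv n i * (v i - η i) + thv n i' * (v i' - η i'))
          = (thv n i - thv n i') * (v i' - v i) := by ring
      nlinarith [key, hth, hvint]
    · apply sum_le_two_point _ _ i i' hne
      · intro c hc1 hc2
        rw [hso c hc1 hc2]
      · rw [hsi, hsi']
        have := cross_ineq (y i) (y i') (v i') (v i) (by linarith) (by linarith)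
        linarith [this]
  · -- last root
    have hilt := i.isLt
    have hii : (i:ℕ) = n - 1 := by omega
    have hthi : thv n i = 1 := by
      unfold thv
      have : ((i:ℕ):ℝ) = (n:ℝ) - 1 := by
        rw [hii, Nat.cast_sub (by omega)]
        norm_num
      rw [this]
      ring
    rcases t with _ | _ | _
    · -- B
      have hroot : simpleRoot n RSType.B i = eps n i := simpleRoot_last_B i hlt
      have hsi : sRefl n (simpleRoot n RSType.B i) v i = -v i := by
        rw [hroot, sRefl_eps, if_pos rfl]
      have hso : ∀ c, c ≠ i → sRefl n (simpleRoot n RSType.B i) v c = v c := by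
        intro c hc; rw [hroot, sRefl_eps, if_neg hc]
      have hηd : η i = 1/2 := by
        have := hη i hic
        rw [hroot, pairing_eps] at this
        linarith
      have hyd : 0 ≤ y i := by
        have := hydom i hic
        rw [hroot, pairing_eps] at this
        linarith
      have hvd : v i < 0 := by
        have := hneg
        rw [hroot, pairing_eps] at this
        linarith
      have hvint : 2 * v i ≤ -1 := by
        obtain ⟨m1, hm1⟩ := h1 i
        have he : 2 * v i = ((2*m1 + 1 : ℤ) : ℝ) := by push_cast; linarith
        exact int_lt_le_neg_one _ _ he (by linarith)
      constructor
      · unfold gf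
        rw [sum_univ_one_split (fun c => thv n c * (sRefl n (simpleRoot n RSType.B i) v c - η c)) i,
          sum_univ_one_split (fun c => thv n c * (v c - η c)) i]
        have hrest : ∑ c ∈ Finset.univ.erase i,
            thv n c * (sRefl n (simpleRoot n RSType.B i) v c - η c)
            = ∑ c ∈ Finset.univ.erase i, thv n c * (v c - η c) := by
          apply Finset.sum_congr rfl
          intro c hc
          rw [hso c (Finset.mem_erase.1 hc).1]
        rw [hrest, hsi, hthi]
        nlinarith [hvint]
      · apply Finset.sum_le_sum
        intro c _
        by_cases hc : c = i
        · rw [hc, hsi, show y i - -v i = y i + v i from by ring]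
          exact flip_ineq (y i) (v i) hyd (le_of_lt hvd)
        · rw [hso c hc]
    · -- C
      have hroot : simpleRoot n RSType.C i = (2:ℝ) • eps n i := simpleRoot_last_C i hlt
      have hsi : sRefl n (simpleRoot n RSType.C i) v i = -v i := by
        rw [hroot, sRefl_2eps, if_pos rfl]
      have hso : ∀ c, c ≠ i → sRefl n (simpleRoot n RSType.C i) v c = v c := by
        intro c hc; rw [hroot, sRefl_2eps, if_neg hc]
      have hηd : η i = 1 := by
        have := hη i hic
        rwa [hroot, pairing_2eps] at this
      have hyd : 0 ≤ y i := by
        have := hydom i hic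
        rwa [hroot, pairing_2eps] at this
      have hvd : v i < 0 := by
        have := hneg
        rwa [hroot, pairing_2eps] at this
      have hvint : v i ≤ -1 := by
        obtain ⟨m1, hm1⟩ := h1 i
        have he : v i = ((m1 + 1 : ℤ) : ℝ) := by push_cast; linarith
        exact int_lt_le_neg_one _ _ he hvd
      constructor
      · unfold gf
        rw [sum_univ_one_split (fun c => thv n c * (sRefl n (simpleRoot n RSType.C i) v c - η c)) i,
          sum_univ_one_split (fun c => thv n c * (v c - η c)) i]
        have hrest : ∑ c ∈ Finset.univ.erase i,
            thv n c * (sRefl n (simpleRoot n RSType.C i) v c - η c)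
            = ∑ c ∈ Finset.univ.erase i, thv n c * (v c - η c) := by
          apply Finset.sum_congr rfl
          intro c hc
          rw [hso c (Finset.mem_erase.1 hc).1]
        rw [hrest, hsi, hthi]
        nlinarith [hvint]
      · apply Finset.sum_le_sum
        intro c _
        by_cases hc : c = i
        · rw [hc, hsi, show y i - -v i = y i + v i from by ring]
          exact flip_ineq (y i) (v i) hyd (le_of_lt hvd)
        · rw [hso c hc]
    · -- D
      have hpk2 : p k ≤ n - 2 := by
        have h2 := hpkD rfl
        rcases Nat.eq_zero_or_pos k with h0 | h0
        · rw [h0, hp0]; omega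
        · have := hic k h0 le_rfl
          omega
      have hi2lt : n - 2 < n := by omega
      set i2 : Fin n := ⟨n-2, hi2lt⟩ with hi2def
      have hvi2 : (i2 : ℕ) = n - 2 := rfl
      have hne2 : i2 ≠ i := by
        intro e
        have : (i2:ℕ) = (i:ℕ) := congrArg _ e
        omega
      have hroot : simpleRoot n RSType.D i = eps n i2 + eps n i := by
        rw [simpleRoot_last_D i hlt hn,
          show (⟨(i:ℕ)-1, by omega⟩ : Fin n) = i2 from
            Fin.ext (show (i:ℕ) - 1 = n - 2 by omega)]
      have hsi2 : sRefl n (simpleRoot n RSType.D i) v i2 = -v i := by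
        rw [hroot, sRefl_add_eps v i2 i hne2, if_pos rfl]
      have hsi : sRefl n (simpleRoot n RSType.D i) v i = -v i2 := by
        rw [hroot, sRefl_add_eps v i2 i hne2, if_neg (Ne.symm hne2), if_pos rfl]
      have hso : ∀ c, c ≠ i2 → c ≠ i → sRefl n (simpleRoot n RSType.D i) v c = v c := by
        intro c hc1 hc2; rw [hroot, sRefl_add_eps v i2 i hne2, if_neg hc1, if_neg hc2]
      have hηd : η i2 + η i = 1 := by
        have := hη i hic
        rwa [hroot, pairing_add_eps _ _ _ hne2] at this
      have hyd : 0 ≤ y i2 + y i := by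
        have := hydom i hic
        rwa [hroot, pairing_add_eps _ _ _ hne2] at this
      have hvd : v i2 + v i < 0 := by
        have := hneg
        rwa [hroot, pairing_add_eps _ _ _ hne2] at this
      have hvint : v i2 + v i ≤ -1 := by
        obtain ⟨m1, hm1⟩ := h1 i2
        obtain ⟨m2, hm2⟩ := h1 i
        have he : v i2 + v i = ((m1 + m2 + 1 : ℤ) : ℝ) := by push_cast; linarith
        exact int_lt_le_neg_one _ _ he hvd
      have hthi2 : thv n i2 = 3 := by
        unfold thv
        have : ((i2:ℕ):ℝ) = (n:ℝ) - 2 := by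
          rw [hvi2, Nat.cast_sub (by omega)]
          norm_num
        rw [this]
        ring
      constructor
      · unfold gf
        rw [sum_univ_two_split (fun c => thv n c * (sRefl n (simpleRoot n RSType.D i) v c - η c)) i2 i hne2,
          sum_univ_two_split (fun c => thv n c * (v c - η c)) i2 i hne2]
        have hrest : ∑ c ∈ (Finset.univ.erase i2).erase i,
            thv n c * (sRefl n (simpleRoot n RSType.D i) v c - η c)
            = ∑ c ∈ (Finset.univ.erase i2).erase i, thv n c * (v c - η c) := by
          apply Finset.sum_congr rfl
          intro c hc
          rcases Finset.mem_erase.1 hc with ⟨hc2, hc3⟩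
          rcases Finset.mem_erase.1 hc3 with ⟨hc1, -⟩
          rw [hso c hc1 hc2]
        rw [hrest, hsi2, hsi, hthi, hthi2]
        nlinarith [hvint]
      · apply sum_le_two_point _ _ i2 i hne2
        · intro c hc1 hc2
          rw [hso c hc1 hc2]
        · rw [hsi2, hsi]
          have h1' : |y i2 - -v i| = |(y i2 + y i) - (y i - v i)| := by
            congr 1; ring
          have h2' : |y i - -v i2| = |(y i2 + y i) - (y i2 - v i2)| := by
            congr 1; ring
          rw [h1', h2']
          have := X2_ineq (y i2 + y i) (y i2 - v i2) (y i - v i) hyd (by linarith)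
          have e1 : |y i2 - v i2| = |y i2 - v i2| := rfl
          linarith [this]

end Helpers7
section Helpers8

open Finset

lemma KL_lemma (n k : ℕ) (hn : 2 ≤ n) (t : RSType) (p : ℕ → ℕ)
    (hp0 : p 0 = 0) (hmono : ∀ j, j < k → p j < p (j + 1))
    (hpk : p k ≤ n) (hpk1 : p (k + 1) = n) (hpkD : t = RSType.D → p k ≠ n - 1)
    (η : Fin n → ℝ)
    (hη : ∀ i : Fin n, Icond n k p i → pairing n η (simpleRoot n t i) = 1)
    (y : Fin n → ℝ)
    (hydom : ∀ i : Fin n, Icond n k p i → 0 ≤ pairing n y (simpleRoot n t i)) :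
    ∀ (N : ℕ) (v : Fin n → ℝ), Pint n η v → (∑ c, (v c)^2 = ∑ c, (η c)^2) →
    (∀ j, j < k → Mv n p j v = Mv n p j η) → (Av n p k v = Av n p k η) →
    (t = RSType.D → Cv n p k v = Cv n p k η) →
    (∀ mm : ℤ, gf n η v = (mm:ℝ) → (⌈Creal n η⌉ - mm) ≤ (N:ℤ)) →
    ∑ c, |y c - η c| ≤ ∑ c, |y c - v c| := by
  intro N
  induction N with
  | zero =>
    intro v h1 h2 h3 h4 h5 h6
    by_cases hdom : ∀ i : Fin n, Icond n k p i → 0 ≤ pairing n v (simpleRoot n t i)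
    · rw [pin_lemma n k hn t p hp0 hmono hpk hpk1 hpkD η v hη hdom h3 h4 h5]
    · exfalso
      push_neg at hdom
      obtain ⟨i, hic, hneg⟩ := hdom
      obtain ⟨hstep, -⟩ := step_facts n k hn t p hp0 hmono hpk hpk1 hpkD η hη y hydom
        v h1 i hic hneg
      obtain ⟨mm, hmm⟩ := gf_int η v h1
      have hb := h6 mm hmm
      have good := good_gen n k hn t p hp0 hmono hpk hpk1 hpkD η hη i hic
      have hpint' : Pint n η (sRefl n (simpleRoot n t i) v) := good.2.2.1 v h1
      have hnq' : ∑ c, (sRefl n (simpleRoot n t i) v c)^2 = ∑ c, (η c)^2 :=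
        (good.2.1 v).trans h2
      obtain ⟨mm', hmm'⟩ := gf_int η _ hpint'
      have hub : (mm' : ℝ) ≤ Creal n η := hmm' ▸ gf_bound η _ hnq'
      have hub2 : (mm' : ℝ) ≤ (⌈Creal n η⌉ : ℝ) := le_trans hub (Int.le_ceil _)
      have hub3 : mm' ≤ ⌈Creal n η⌉ := by exact_mod_cast hub2
      have hlow : (mm : ℝ) + 1 ≤ (mm' : ℝ) := by
        rw [← hmm, ← hmm']
        exact hstep
      have hlow2 : mm + 1 ≤ mm' := by exact_mod_cast hlow
      omega
  | succ N ih =>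
    intro v h1 h2 h3 h4 h5 h6
    by_cases hdom : ∀ i : Fin n, Icond n k p i → 0 ≤ pairing n v (simpleRoot n t i)
    · rw [pin_lemma n k hn t p hp0 hmono hpk hpk1 hpkD η v hη hdom h3 h4 h5]
    · push_neg at hdom
      obtain ⟨i, hic, hneg⟩ := hdom
      obtain ⟨hstep, hcross⟩ := step_facts n k hn t p hp0 hmono hpk hpk1 hpkD η hη y
        hydom v h1 i hic hneg
      obtain ⟨mm, hmm⟩ := gf_int η v h1
      have good := good_gen n k hn t p hp0 hmono hpk hpk1 hpkD η hη i hic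
      have hpint' : Pint n η (sRefl n (simpleRoot n t i) v) := good.2.2.1 v h1
      have hnq' : ∑ c, (sRefl n (simpleRoot n t i) v c)^2 = ∑ c, (η c)^2 :=
        (good.2.1 v).trans h2
      have hM' : ∀ j, j < k → Mv n p j (sRefl n (simpleRoot n t i) v) = Mv n p j η :=
        fun j hj => (good.2.2.2.1 j hj v).trans (h3 j hj)
      have hA' : Av n p k (sRefl n (simpleRoot n t i) v) = Av n p k η :=
        (good.2.2.2.2.1 v).trans h4
      have hC' : t = RSType.D → Cv n p k (sRefl n (simpleRoot n t i) v) = Cv n p k η :=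
        fun ht => (good.2.2.2.2.2 ht v).trans (h5 ht)
      have hb' : ∀ mm' : ℤ, gf n η (sRefl n (simpleRoot n t i) v) = (mm':ℝ) →
          (⌈Creal n η⌉ - mm') ≤ (N:ℤ) := by
        intro mm' hmm'
        have hb := h6 mm hmm
        have hlow : (mm : ℝ) + 1 ≤ (mm' : ℝ) := by
          rw [← hmm, ← hmm']
          exact hstep
        have hlow2 : mm + 1 ≤ mm' := by exact_mod_cast hlow
        push_cast at hb ⊢
        omega
      exact le_trans (ih _ hpint' hnq' hM' hA' hC' hb') hcross

end Helpers8
/-- Lemma 6.8: let `μ, ν ∈ Λ^{𝔭_I}` with `ν = (w s_β) · μ` for some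
`β ∈ Φ^+ \ Φ_I` and `w ∈ W_I`, where `⟨μ+ρ, β^∨⟩ ∈ ℤ_{>0}`. If `μ ∈ λ + 𝒳_r`
then `ν ∈ λ + 𝒳_r`. -/
theorem stmt7 (n k : ℕ) (hn : 2 ≤ n) (t : RSType)
    (p : ℕ → ℕ) (hp0 : p 0 = 0)
    (hmono : ∀ j, j < k → p j < p (j + 1))
    (hpk : p k ≤ n) (hpk1 : p (k + 1) = n)
    (hpkD : t = RSType.D → p k ≠ n - 1)
    (lam : Fin n → ℝ) (hlam : inLam n t p k lam)
    (hlam1 : ∀ β : Fin n → ℝ, isPosRoot n t β → ¬ inPhiI n t p k β →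
      ¬ ∃ m : ℤ, 0 < m ∧ pairing n (lam + rho n t) β = (m : ℝ))
    (hlam2 : ∀ i : Fin n, (∀ j, 1 ≤ j → j ≤ k → (i : ℕ) + 1 ≠ p j) →
      pairing n (lam + rho n t) (simpleRoot n t i) = 1)
    (r : ℕ) (μ ν : Fin n → ℝ)
    (hμΛ : inLam n t p k μ) (hνΛ : inLam n t p k ν)
    (β : Fin n → ℝ) (hβ : isPosRoot n t β) (hβI : ¬ inPhiI n t p k β)
    (w : Function.End (Fin n → ℝ)) (hw : w ∈ WI n t p k)
    (hν : ν = w (sRefl n β (μ + rho n t)) - rho n t)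
    (hpair : ∃ m : ℤ, 0 < m ∧ pairing n (μ + rho n t) β = (m : ℝ))
    (hμ : inLamX n lam r μ) :
    inLamX n lam r ν := by
  classical
  obtain ⟨a, haX, hμa⟩ := hμ
  obtain ⟨m, hm, hpx⟩ := hpair
  set η : Fin n → ℝ := lam + rho n t with hηdef
  set x : Fin n → ℝ := μ + rho n t with hxdef
  set z : Fin n → ℝ := sRefl n β x with hzdef
  have hxc : ∀ c, x c = η c + (a c : ℝ) := by
    intro c
    rw [hxdef, hηdef, hμa]
    simp only [Pi.add_apply]
    ring
  have hxsum : x = η + (fun c => (a c : ℝ)) := by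
    funext c
    rw [hxc c]
    rfl
  have hη1 : ∀ i : Fin n, Icond n k p i → pairing n η (simpleRoot n t i) = 1 :=
    fun i hi => hlam2 i hi
  have hmR : (0:ℝ) < (m:ℝ) := by exact_mod_cast hm
  have A := hlam1 β hβ hβI
  have hzfacts : Pint n η z ∧ ∑ c, |z c - η c| ≤ ∑ c, |x c - η c| := by
    rcases hβ with ⟨i, j, hij, hsub | hadd⟩ | ⟨htB, i, hβe⟩ | ⟨htC, i, hβe⟩
    · -- β = eps i - eps j
      have hijne : i ≠ j := ne_of_lt hij
      have hpx' : x i - x j = (m:ℝ) := by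
        rw [hsub, pairing_sub_eps _ _ _ hijne] at hpx
        exact hpx
      have hpa : pairing n (fun c => (a c:ℝ)) β = (a i:ℝ) - (a j:ℝ) := by
        rw [hsub]; exact pairing_sub_eps _ i j hijne
      have hηd : η i - η j = (m:ℝ) - ((a i:ℝ) - (a j:ℝ)) := by
        have h0 : pairing n x β = pairing n η β + pairing n (fun c => (a c:ℝ)) β := by
          rw [hxsum, pairing_addl]
        rw [hpx, hpa] at h0
        rw [hsub, pairing_sub_eps _ _ _ hijne] at h0
        linarith
      have hηe : η i - η j = ((m - (a i - a j) : ℤ):ℝ) := by push_cast; linarith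
      have hle : η i - η j ≤ 0 := by
        by_contra hpos
        push_neg at hpos
        apply A
        refine ⟨m - (a i - a j), ?_, ?_⟩
        · have h2 : (0:ℝ) < ((m - (a i - a j):ℤ):ℝ) := hηe ▸ hpos
          exact_mod_cast h2
        · rw [hsub, pairing_sub_eps _ _ _ hijne]
          exact hηe
      have hzi : z i = x j := by
        rw [hzdef, hsub, sRefl_sub_eps x i j hijne i, if_pos rfl]
      have hzj : z j = x i := by
        rw [hzdef, hsub, sRefl_sub_eps x i j hijne j, if_neg (Ne.symm hijne), if_pos rfl]
      have hzo : ∀ c, c ≠ i → c ≠ j → z c = x c := by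
        intro c h1 h2
        rw [hzdef, hsub, sRefl_sub_eps x i j hijne c, if_neg h1, if_neg h2]
      constructor
      · intro c
        by_cases h1 : c = i
        · exact ⟨a i - m, by rw [h1, hzi]; push_cast; linarith [hxc j, hηd]⟩
        · by_cases h2 : c = j
          · exact ⟨a j + m, by rw [h2, hzj]; push_cast; linarith [hxc i, hηd]⟩
          · exact ⟨a c, by rw [hzo c h1 h2]; linarith [hxc c]⟩
      · apply sum_le_two_point _ _ i j hijne
        · intro c h1 h2
          rw [hzo c h1 h2]
        · rw [hzi, hzj]
          have := cross_ineq (x i) (x j) (η j) (η i) (by linarith) (by linarith)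
          linarith
    · -- β = eps i + eps j
      have hijne : i ≠ j := ne_of_lt hij
      have hpx' : x i + x j = (m:ℝ) := by
        rw [hadd, pairing_add_eps _ _ _ hijne] at hpx
        exact hpx
      have hpa : pairing n (fun c => (a c:ℝ)) β = (a i:ℝ) + (a j:ℝ) := by
        rw [hadd]; exact pairing_add_eps _ i j hijne
      have hηd : η i + η j = (m:ℝ) - ((a i:ℝ) + (a j:ℝ)) := by
        have h0 : pairing n x β = pairing n η β + pairing n (fun c => (a c:ℝ)) β := by
          rw [hxsum, pairing_addl]
        rw [hpx, hpa] at h0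
        rw [hadd, pairing_add_eps _ _ _ hijne] at h0
        linarith
      have hηe : η i + η j = ((m - (a i + a j) : ℤ):ℝ) := by push_cast; linarith
      have hle : η i + η j ≤ 0 := by
        by_contra hpos
        push_neg at hpos
        apply A
        refine ⟨m - (a i + a j), ?_, ?_⟩
        · have h2 : (0:ℝ) < ((m - (a i + a j):ℤ):ℝ) := hηe ▸ hpos
          exact_mod_cast h2
        · rw [hadd, pairing_add_eps _ _ _ hijne]
          exact hηe
      have hzi : z i = -x j := by
        rw [hzdef, hadd, sRefl_add_eps x i j hijne i, if_pos rfl]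
      have hzj : z j = -x i := by
        rw [hzdef, hadd, sRefl_add_eps x i j hijne j, if_neg (Ne.symm hijne), if_pos rfl]
      have hzo : ∀ c, c ≠ i → c ≠ j → z c = x c := by
        intro c h1 h2
        rw [hzdef, hadd, sRefl_add_eps x i j hijne c, if_neg h1, if_neg h2]
      constructor
      · intro c
        by_cases h1 : c = i
        · exact ⟨a i - m, by rw [h1, hzi]; push_cast; linarith [hxc j, hηd]⟩
        · by_cases h2 : c = j
          · exact ⟨a j - m, by rw [h2, hzj]; push_cast; linarith [hxc i, hηd]⟩
          · exact ⟨a c, by rw [hzo c h1 h2]; linarith [hxc c]⟩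
      · apply sum_le_two_point _ _ i j hijne
        · intro c h1 h2
          rw [hzo c h1 h2]
        · rw [hzi, hzj]
          have e1 : -x j - η i = -((m:ℝ) - (x i - η i)) := by linarith
          have e2 : -x i - η j = -((m:ℝ) - (x j - η j)) := by linarith
          rw [e1, e2, abs_neg, abs_neg]
          have := X2_ineq (m:ℝ) (x i - η i) (x j - η j) (le_of_lt hmR) (by linarith)
          linarith
    · -- type B, β = eps i
      have hpx' : 2 * x i = (m:ℝ) := by
        rw [hβe, pairing_eps] at hpx
        exact hpx
      have hpa : pairing n (fun c => (a c:ℝ)) β = 2 * (a i:ℝ) := by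
        rw [hβe]; exact pairing_eps _ i
      have hηd : 2 * η i = (m:ℝ) - 2 * (a i:ℝ) := by
        have h0 : pairing n x β = pairing n η β + pairing n (fun c => (a c:ℝ)) β := by
          rw [hxsum, pairing_addl]
        rw [hpx, hpa] at h0
        rw [hβe, pairing_eps] at h0
        linarith
      have hηe : 2 * η i = ((m - 2 * a i : ℤ):ℝ) := by push_cast; linarith
      have hle : η i ≤ 0 := by
        by_contra hpos
        push_neg at hpos
        apply A
        refine ⟨m - 2 * a i, ?_, ?_⟩
        · have h2 : (0:ℝ) < ((m - 2 * a i:ℤ):ℝ) := by rw [← hηe]; linarith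
          exact_mod_cast h2
        · rw [hβe, pairing_eps]
          exact hηe
      have hzi : z i = -x i := by
        rw [hzdef, hβe, sRefl_eps x i i, if_pos rfl]
      have hzo : ∀ c, c ≠ i → z c = x c := by
        intro c h1
        rw [hzdef, hβe, sRefl_eps x i c, if_neg h1]
      constructor
      · intro c
        by_cases h1 : c = i
        · exact ⟨a i - m, by rw [h1, hzi]; push_cast; linarith [hxc i, hηd]⟩
        · exact ⟨a c, by rw [hzo c h1]; linarith [hxc c]⟩
      · apply Finset.sum_le_sum
        intro c _
        by_cases h1 : c = i
        · rw [h1, hzi, show -x i - η i = -(x i + η i) from by ring, abs_neg]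
          exact flip_ineq (x i) (η i) (by linarith) hle
        · rw [hzo c h1]
    · -- type C, β = 2 • eps i
      have hpx' : x i = (m:ℝ) := by
        rw [hβe, pairing_2eps] at hpx
        exact hpx
      have hpa : pairing n (fun c => (a c:ℝ)) β = (a i:ℝ) := by
        rw [hβe]; exact pairing_2eps _ i
      have hηd : η i = (m:ℝ) - (a i:ℝ) := by
        have h0 : pairing n x β = pairing n η β + pairing n (fun c => (a c:ℝ)) β := by
          rw [hxsum, pairing_addl]
        rw [hpx, hpa] at h0
        rw [hβe, pairing_2eps] at h0
        linarith
      have hηe : η i = ((m - a i : ℤ):ℝ) := by push_cast; linarith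
      have hle : η i ≤ 0 := by
        by_contra hpos
        push_neg at hpos
        apply A
        refine ⟨m - a i, ?_, ?_⟩
        · have h2 : (0:ℝ) < ((m - a i:ℤ):ℝ) := by rw [← hηe]; linarith
          exact_mod_cast h2
        · rw [hβe, pairing_2eps]
          exact hηe
      have hzi : z i = -x i := by
        rw [hzdef, hβe, sRefl_2eps x i i, if_pos rfl]
      have hzo : ∀ c, c ≠ i → z c = x c := by
        intro c h1
        rw [hzdef, hβe, sRefl_2eps x i c, if_neg h1]
      constructor
      · intro c
        by_cases h1 : c = i
        · exact ⟨a i - 2 * m, by rw [h1, hzi]; push_cast; linarith [hxc i, hηd]⟩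
        · exact ⟨a c, by rw [hzo c h1]; linarith [hxc c]⟩
      · apply Finset.sum_le_sum
        intro c _
        by_cases h1 : c = i
        · rw [h1, hzi, show -x i - η i = -(x i + η i) from by ring, abs_neg]
          exact flip_ineq (x i) (η i) (by linarith) hle
        · rw [hzo c h1]
  -- y-dominance
  have hyeq : ν + rho n t = w z := by
    rw [hν]
    exact sub_add_cancel _ _
  have hydom : ∀ i : Fin n, Icond n k p i → 0 ≤ pairing n (w z) (simpleRoot n t i) := by
    intro i hi
    obtain ⟨mn, hmn⟩ := hνΛ i hi
    rw [← hyeq, pairing_addl, hmn, pairing_rho_simple n hn t i]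
    have : (0:ℝ) ≤ (mn:ℝ) := Nat.cast_nonneg _
    linarith
  -- Good property of w
  have hgood : GoodEnd n k t p η w := by
    unfold WI at hw
    refine Submonoid.closure_induction ?_ ?_ ?_ hw
    · rintro s ⟨i, hic, rfl⟩
      exact good_gen n k hn t p hp0 hmono hpk hpk1 hpkD η hη1 i hic
    · exact good_one n k t p η
    · intro g1 g2 _ _ hg1 hg2
      exact good_comp n k t p η g1 g2 hg1 hg2
  -- apply the key lemma
  have hPη : Pint n η η := fun c => ⟨0, by simp⟩
  have hP0 : Pint n η (w η) := hgood.2.2.1 η hPη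
  obtain ⟨mm0, hmm0⟩ := gf_int η (w η) hP0
  have hKL := KL_lemma n k hn t p hp0 hmono hpk hpk1 hpkD η hη1 (w z) hydom
      (⌈Creal n η⌉ - mm0).toNat (w η) hP0 (hgood.2.1 η)
      (fun j hj => hgood.2.2.2.1 j hj η) (hgood.2.2.2.2.1 η)
      (fun ht => hgood.2.2.2.2.2 ht η)
      (by
        intro mm hmm
        have h1 : (mm:ℝ) = (mm0:ℝ) := by rw [← hmm, ← hmm0]
        have h2 : mm = mm0 := by exact_mod_cast h1
        rw [h2]
        exact Int.self_le_toNat _)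
  have hL1 : ∑ c, |w z c - w η c| = ∑ c, |z c - η c| := hgood.1 z η
  have haXi : (∑ i, |a i| : ℤ) ≤ (r:ℤ) := haX
  have haR : ∑ c, |((a c):ℝ)| ≤ (r:ℝ) := by
    have : ((∑ i, |a i| : ℤ):ℝ) ≤ ((r:ℤ):ℝ) := by exact_mod_cast haXi
    push_cast at this
    exact this
  have hfin : ∑ c, |w z c - η c| ≤ (r:ℝ) := by
    calc ∑ c, |w z c - η c| ≤ ∑ c, |w z c - w η c| := hKL
      _ = ∑ c, |z c - η c| := hL1
      _ ≤ ∑ c, |x c - η c| := hzfacts.2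
      _ = ∑ c, |((a c):ℝ)| := by
          apply Finset.sum_congr rfl
          intro c _
          rw [hxc c]
          congr 1
          ring
      _ ≤ (r:ℝ) := haR
  have hyint : Pint n η (w z) := hgood.2.2.1 z hzfacts.1
  choose b hb using hyint
  refine ⟨b, ?_, ?_⟩
  · show (∑ i, |b i| : ℤ) ≤ (r:ℤ)
    have h1 : ((∑ i, |b i| : ℤ):ℝ) ≤ (r:ℝ) := by
      push_cast
      calc ∑ c, |((b c):ℝ)| = ∑ c, |w z c - η c| := by
            apply Finset.sum_congr rfl
            intro c _
            rw [hb c]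
        _ ≤ (r:ℝ) := hfin
    exact_mod_cast h1
  · funext c
    have h1 : ν c = w z c - rho n t c := by rw [hν]; rfl
    have h2 : w z c - η c = (b c : ℝ) := hb c
    have h3 : η c = lam c + rho n t c := rfl
    show ν c = lam c + (b c : ℝ)
    rw [h1]
    linarith [h2, h3]
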